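/- arXiv:1901.02380 — 5 statements merged into one kernel-verified Lean document; each statement's English description precedes it below -/
import Mathlib

section
/- For every boundary point x ∈ ℝⁿ, the inverted-potential action functional I_ip admits a unique minimizer γ_x over the admissible class A_x of locally absolutely continuous curves γ : (-∞, 0] → ℝⁿ with γ(0) = x and finite action. -/
open MeasureTheory Set Filter
open scoped ENNReal NNReal Topology

noncomputable section

/-- Euclidean space `ℝⁿ`. -/
abbrev En (n : ℕ) := EuclideanSpace ℝ (Fin n)

/-- The inverted-potential action `I_ip[γ] = ∫_{-∞}^0 ((1/2) m |γ'(t)|² + V(γ(t))) dt`. -/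
def Iip (n : ℕ) (m : ℝ) (V : En n → ℝ) (γ : ℝ → En n) : ℝ :=
  ∫ t in Iic (0:ℝ), ((1/2) * m * ‖deriv γ t‖^2 + V (γ t))

/-- Local absolute continuity of a curve on `(-∞, 0]`, expressed through the
fundamental theorem of calculus: `γ` is continuous, its a.e. derivative is locally
integrable, and `γ` is recovered by integrating its derivative on compact subintervals. -/
def LocAC (n : ℕ) (γ : ℝ → En n) : Prop :=
  ContinuousOn γ (Iic (0:ℝ)) ∧
  (∀ a b : ℝ, a ≤ b → b ≤ 0 → IntegrableOn (deriv γ) (Icc a b)) ∧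
  (∀ a b : ℝ, a ≤ b → b ≤ 0 → γ b - γ a = ∫ t in a..b, deriv γ t)

/-- The admissible class `A_x`: locally absolutely continuous curves on `(-∞,0]`
with `γ(0) = x` and finite inverted-potential action. -/
def Adm (n : ℕ) (m : ℝ) (V : En n → ℝ) (x : En n) (γ : ℝ → En n) : Prop :=
  LocAC n γ ∧ γ 0 = x ∧
    IntegrableOn (fun t => (1/2) * m * ‖deriv γ t‖^2 + V (γ t)) (Iic (0:ℝ))

namespace IPaux

open scoped Topology

/-- interval integrability of `deriv γ` for LocAC curves on nonpositive intervals -/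
theorem locac_intInt {n : ℕ} {γ : ℝ → En n} (hγ : LocAC n γ) {a b : ℝ}
    (hab : a ≤ b) (hb : b ≤ 0) : IntervalIntegrable (deriv γ) volume a b := by
  have := hγ.2.1 a b hab hb
  rw [← uIcc_of_le hab] at this
  exact this.intervalIntegrable

/-- representation of a LocAC curve as primitive of its derivative -/
theorem locac_rep {n : ℕ} {γ : ℝ → En n} (hγ : LocAC n γ) {t : ℝ} (ht : t ≤ 0) :
    γ t = γ 0 + ∫ s in (0:ℝ)..t, deriv γ s := by
  have h := hγ.2.2 t 0 ht le_rfl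
  have h2 : ∫ s in (0:ℝ)..t, deriv γ s = -∫ s in t..(0:ℝ), deriv γ s :=
    intervalIntegral.integral_symm _ _
  rw [h2, ← h]; abel

open Metric intervalIntegral in
theorem ldiff {E : Type*} [NormedAddCommGroup E] [NormedSpace ℝ E] [CompleteSpace E]
    {f : ℝ → E} (hf : MeasureTheory.LocallyIntegrable f (volume : Measure ℝ)) :
    ∀ᵐ t : ℝ, HasDerivAt (fun s => ∫ u in (0:ℝ)..s, f u) (f t) t := by
  filter_upwards [IsUnifLocDoublingMeasure.ae_tendsto_average_norm_sub (μ := volume) hf 1]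
    with t ht
  have havg : Tendsto (fun s : ℝ => ⨍ y in Metric.closedBall t |s - t|, ‖f y - f t‖)
      (𝓝[≠] t) (𝓝 0) := by
    apply ht (fun _ => t) (fun s => |s - t|)
    · rw [tendsto_nhdsWithin_iff]
      constructor
      · have : Tendsto (fun s : ℝ => |s - t|) (𝓝 t) (𝓝 |t - t|) :=
          (continuous_abs.comp (continuous_id.sub continuous_const)).tendsto t
        simpa using this.mono_left nhdsWithin_le_nhds
      · filter_upwards [self_mem_nhdsWithin] with s hs
        exact abs_pos.2 (sub_ne_zero.2 hs)
    · filter_upwards with s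
      have h1 : (0:ℝ) ≤ |s - t| := abs_nonneg _
      have := Metric.mem_closedBall_self (x := t) (ε := 1 * |s - t|) (by linarith)
      simpa using this
  rw [hasDerivAt_iff_tendsto]
  rw [← nhdsNE_sup_pure t]
  rw [tendsto_sup]
  constructor
  · apply squeeze_zero' (Filter.Eventually.of_forall fun s => by positivity)
      ?_ (by simpa using havg.const_mul 2)
    filter_upwards [self_mem_nhdsWithin] with s hs
    set r := |s - t| with hr
    have hrpos : 0 < r := abs_pos.2 (sub_ne_zero.2 hs)
    have hint : ∀ a b : ℝ, IntervalIntegrable f volume a b := fun a b =>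
      (hf.integrableOn_isCompact isCompact_uIcc).intervalIntegrable
    have hcb : IntegrableOn (fun y => ‖f y - f t‖) (Metric.closedBall t r) volume := by
      refine ((hf.integrableOn_isCompact (isCompact_closedBall t r)).sub ?_).norm
      exact integrableOn_const measure_closedBall_lt_top.ne
    have key : ‖(∫ u in (0:ℝ)..s, f u) - (∫ u in (0:ℝ)..t, f u) - (s - t) • f t‖
        ≤ ∫ y in Metric.closedBall t r, ‖f y - f t‖ := by
      have e1 : (∫ u in (0:ℝ)..s, f u) - (∫ u in (0:ℝ)..t, f u) = ∫ u in t..s, f u :=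
        integral_interval_sub_left (hint 0 s) (hint 0 t)
      have e2 : (s - t) • f t = ∫ _u in t..s, f t := by
        rw [intervalIntegral.integral_const]
      rw [e1, e2, ← intervalIntegral.integral_sub (hint t s) intervalIntegrable_const]
      refine le_trans (intervalIntegral.norm_integral_le_integral_norm_uIoc) ?_
      apply setIntegral_mono_set hcb
      · filter_upwards with y using norm_nonneg _
      · apply HasSubset.Subset.eventuallyLE
        intro y hy
        rw [Real.closedBall_eq_Icc]
        rcases le_total t s with h | h
        · rw [uIoc_of_le h] at hy
          constructor
          · linarith [hy.1, hrpos]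
          · have : s - t ≤ r := le_abs_self _
            linarith [hy.2]
        · rw [uIoc_of_ge h] at hy
          constructor
          · have h2 : t - s ≤ r := by rw [hr, abs_sub_comm]; exact le_abs_self _
            linarith [hy.1]
          · linarith [hy.2, hrpos]
    have havg_eq : (⨍ y in Metric.closedBall t r, ‖f y - f t‖)
        = (2 * r)⁻¹ * ∫ y in Metric.closedBall t r, ‖f y - f t‖ := by
      rw [setAverage_eq, measureReal_def, Real.volume_closedBall, ENNReal.toReal_ofReal (by linarith)]
      simp [smul_eq_mul]
    have hnn : 0 ≤ ∫ y in Metric.closedBall t r, ‖f y - f t‖ :=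
      setIntegral_nonneg measurableSet_closedBall fun y _ => norm_nonneg _
    calc ‖s - t‖⁻¹ * ‖(∫ u in (0:ℝ)..s, f u) - (∫ u in (0:ℝ)..t, f u) - (s - t) • f t‖
        ≤ r⁻¹ * ∫ y in Metric.closedBall t r, ‖f y - f t‖ := by
          rw [Real.norm_eq_abs, ← hr]
          exact mul_le_mul_of_nonneg_left key (by positivity)
      _ = 2 * ⨍ y in Metric.closedBall t r, ‖f y - f t‖ := by
          rw [havg_eq]; field_simp
  · rw [tendsto_pure_left]
    intro U hU
    simpa using mem_of_mem_nhds hU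

/-- local integrability of the truncated function -/
theorem locInt_indicator {n : ℕ} {f : ℝ → En n}
    (hf : ∀ a b : ℝ, a ≤ b → b ≤ 0 → IntegrableOn f (Icc a b)) :
    MeasureTheory.LocallyIntegrable ((Iic (0:ℝ)).indicator f) volume := by
  rw [MeasureTheory.locallyIntegrable_iff]
  intro k hk
  obtain ⟨R, hR⟩ := hk.isBounded.subset_closedBall 0
  set R' := max R 0 with hR'
  have hR'0 : 0 ≤ R' := le_max_right _ _
  have hsub : k ⊆ Icc (-R') R' := by
    intro u hu
    have := hR hu
    rw [Metric.mem_closedBall, Real.dist_eq, sub_zero] at this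
    have h1 : |u| ≤ R' := le_trans this (le_max_left _ _)
    rw [abs_le] at h1
    exact ⟨h1.1, h1.2⟩
  apply IntegrableOn.mono_set _ hsub
  rw [IntegrableOn, MeasureTheory.integrable_indicator_iff measurableSet_Iic]
  rw [IntegrableOn, Measure.restrict_restrict measurableSet_Iic]
  have : Iic (0:ℝ) ∩ Icc (-R') R' = Icc (-R') 0 := by
    ext u
    simp only [mem_inter_iff, mem_Iic, mem_Icc]
    constructor
    · rintro ⟨h1, h2, h3⟩; exact ⟨h2, h1⟩
    · rintro ⟨h1, h2⟩; exact ⟨h2, ⟨h1, le_trans h2 hR'0⟩⟩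
  rw [this]
  exact hf (-R') 0 (by linarith) le_rfl

/-- a.e. differentiability of primitives on the negative half line -/
theorem primitive_ae {n : ℕ} {f : ℝ → En n}
    (hf : ∀ a b : ℝ, a ≤ b → b ≤ 0 → IntegrableOn f (Icc a b)) :
    ∀ᵐ t : ℝ, t < 0 → HasDerivAt (fun s => ∫ u in (0:ℝ)..s, f u) (f t) t := by
  filter_upwards [ldiff (locInt_indicator hf)] with t ht ht0
  have hev : (fun s => ∫ u in (0:ℝ)..s, f u)
      =ᶠ[𝓝 t] (fun s => ∫ u in (0:ℝ)..s, (Iic (0:ℝ)).indicator f u) := by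
    filter_upwards [Iio_mem_nhds ht0] with s hs
    apply intervalIntegral.integral_congr
    intro u hu
    rw [uIcc_of_ge (le_of_lt hs)] at hu
    exact (indicator_of_mem (mem_Iic.2 hu.2) f).symm
  have h2 := ht.congr_of_eventuallyEq hev
  rwa [indicator_of_mem (mem_Iic.2 ht0.le) f] at h2

/-- a.e. differentiability of LocAC curves -/
theorem locac_ae_deriv {n : ℕ} {γ : ℝ → En n} (hγ : LocAC n γ) :
    ∀ᵐ t : ℝ, t < 0 → HasDerivAt γ (deriv γ t) t := by
  filter_upwards [primitive_ae hγ.2.1] with t ht ht0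
  have hev : γ =ᶠ[𝓝 t] (fun s => γ 0 + ∫ u in (0:ℝ)..s, deriv γ u) := by
    filter_upwards [Iio_mem_nhds ht0] with s hs
    exact locac_rep hγ (le_of_lt hs)
  exact (((ht ht0).const_add (γ 0)).congr_of_eventuallyEq hev)




section Split
variable {n : ℕ} {m : ℝ} {V : En n → ℝ} {x : En n} {γ : ℝ → En n}

theorem meas_kin (γ : ℝ → En n) (m : ℝ) :
    AEStronglyMeasurable (fun t => (1/2) * m * ‖deriv γ t‖^2)
      (volume.restrict (Iic (0:ℝ))) :=
  ((((measurable_deriv γ).norm.pow_const 2).const_mul _)).aestronglyMeasurable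

theorem meas_pot (hVc : Continuous V) (hγ : ContinuousOn γ (Iic (0:ℝ))) :
    AEStronglyMeasurable (fun t => V (γ t)) (volume.restrict (Iic (0:ℝ))) :=
  (hVc.comp_continuousOn hγ).aestronglyMeasurable measurableSet_Iic

theorem adm_kin_int (hm : 0 < m) (hVpos : ∀ y, 0 ≤ V y) (h : Adm n m V x γ) :
    IntegrableOn (fun t => (1/2) * m * ‖deriv γ t‖^2) (Iic (0:ℝ)) := by
  refine h.2.2.mono' (meas_kin γ m) ?_
  filter_upwards with t
  have h1 : (0:ℝ) ≤ (1/2) * m * ‖deriv γ t‖^2 := by positivity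
  rw [Real.norm_eq_abs, abs_of_nonneg h1]
  linarith [hVpos (γ t)]

theorem adm_pot_int (hm : 0 < m) (hVpos : ∀ y, 0 ≤ V y) (hVc : Continuous V)
    (h : Adm n m V x γ) : IntegrableOn (fun t => V (γ t)) (Iic (0:ℝ)) := by
  refine h.2.2.mono' (meas_pot hVc h.1.1) ?_
  filter_upwards with t
  rw [Real.norm_eq_abs, abs_of_nonneg (hVpos (γ t))]
  have h1 : (0:ℝ) ≤ (1/2) * m * ‖deriv γ t‖^2 := by positivity
  linarith

theorem adm_sq_int (hm : 0 < m) (hVpos : ∀ y, 0 ≤ V y) (h : Adm n m V x γ) :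
    IntegrableOn (fun t => ‖deriv γ t‖^2) (Iic (0:ℝ)) := by
  have h2 := (adm_kin_int hm hVpos h).const_mul (2/m)
  have he : (fun t => 2 / m * ((1/2) * m * ‖deriv γ t‖^2)) = fun t => ‖deriv γ t‖^2 := by
    funext t; field_simp
  rwa [he] at h2

theorem iip_split (hm : 0 < m) (hVpos : ∀ y, 0 ≤ V y) (hVc : Continuous V)
    (h : Adm n m V x γ) :
    Iip n m V γ = (∫ t in Iic (0:ℝ), (1/2) * m * ‖deriv γ t‖^2)
      + ∫ t in Iic (0:ℝ), V (γ t) :=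
  integral_add (adm_kin_int hm hVpos h) (adm_pot_int hm hVpos hVc h)

theorem kin_nonneg (hm : 0 < m) :
    0 ≤ ∫ t in Iic (0:ℝ), (1/2) * m * ‖deriv γ t‖^2 :=
  integral_nonneg fun t => by positivity

theorem pot_nonneg (hVpos : ∀ y, 0 ≤ V y) :
    0 ≤ ∫ t in Iic (0:ℝ), V (γ t) :=
  integral_nonneg fun t => hVpos _

theorem iip_nonneg (hm : 0 < m) (hVpos : ∀ y, 0 ≤ V y) : 0 ≤ Iip n m V γ :=
  integral_nonneg fun t => add_nonneg (by positivity) (hVpos _)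

theorem memLp_deriv (hm : 0 < m) (hVpos : ∀ y, 0 ≤ V y) (h : Adm n m V x γ) :
    MemLp (deriv γ) 2 (volume.restrict (Iic (0:ℝ))) := by
  rw [memLp_two_iff_integrable_sq_norm (stronglyMeasurable_deriv γ).aestronglyMeasurable]
  exact adm_sq_int hm hVpos h

theorem lp_normsq {μ : Measure ℝ} (F : Lp (En n) 2 μ) :
    ‖F‖^2 = ∫ t, ‖F t‖^2 ∂μ := by
  calc ‖F‖^2 = inner ℝ F F := (real_inner_self_eq_norm_sq F).symm
    _ = ∫ t, inner ℝ (F t) (F t) ∂μ := L2.inner_def F F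
    _ = ∫ t, ‖F t‖^2 ∂μ := by
        apply integral_congr_ae
        filter_upwards with t
        exact real_inner_self_eq_norm_sq _

end Split


section Mid
variable {n : ℕ} {m : ℝ} {V : En n → ℝ} {x : En n}

theorem ae_ne_zero : ∀ᵐ t : ℝ, t ≠ (0:ℝ) := by
  rw [ae_iff]
  have : {t : ℝ | ¬ t ≠ 0} = {0} := by ext t; simp
  rw [this]
  exact measure_singleton 0

theorem midpoint_est (hm : 0 < m) (hVpos : ∀ y, 0 ≤ V y) (hVc : Continuous V)
    (hVconv : ConvexOn ℝ univ V) {γ1 γ2 : ℝ → En n}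
    (h1 : Adm n m V x γ1) (h2 : Adm n m V x γ2) :
    Adm n m V x (fun t => (2:ℝ)⁻¹ • (γ1 t + γ2 t)) ∧
    IntegrableOn (fun t => ‖deriv γ1 t - deriv γ2 t‖^2) (Iic (0:ℝ)) ∧
    Iip n m V (fun t => (2:ℝ)⁻¹ • (γ1 t + γ2 t))
      + (m/8) * ∫ t in Iic (0:ℝ), ‖deriv γ1 t - deriv γ2 t‖^2
      ≤ (Iip n m V γ1 + Iip n m V γ2)/2 := by
  set η : ℝ → En n := fun t => (2:ℝ)⁻¹ • (γ1 t + γ2 t) with hη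
  set g : ℝ → En n := fun t => (2:ℝ)⁻¹ • (deriv γ1 t + deriv γ2 t) with hg
  -- a.e. identification of deriv η
  have hd : ∀ᵐ t : ℝ, t < 0 → deriv η t = g t := by
    filter_upwards [locac_ae_deriv h1.1, locac_ae_deriv h2.1] with t H1 H2 ht0
    exact (((H1 ht0).add (H2 ht0)).const_smul ((2:ℝ)⁻¹)).deriv
  have hd' : ∀ᵐ t : ℝ, t ∈ Iic (0:ℝ) → deriv η t = g t := by
    filter_upwards [hd, ae_ne_zero] with t H hne htmem
    exact H (lt_of_le_of_ne htmem hne)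
  have hd0 : ∀ᵐ t ∂(volume.restrict (Iic (0:ℝ))), deriv η t = g t :=
    (ae_restrict_iff' measurableSet_Iic).2 hd'
  -- LocAC of η
  have hcont : ContinuousOn η (Iic (0:ℝ)) := by
    have h := (h1.1.1.add h2.1.1).const_smul ((2:ℝ)⁻¹); exact h
  have hdint : ∀ a b : ℝ, a ≤ b → b ≤ 0 → IntegrableOn (deriv η) (Icc a b) := by
    intro a b hab hb
    have hgint : IntegrableOn g (Icc a b) :=
      ((h1.1.2.1 a b hab hb).add (h2.1.2.1 a b hab hb)).smul ((2:ℝ)⁻¹)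
    refine hgint.congr ?_
    rw [EventuallyEq, ae_restrict_iff' measurableSet_Icc]
    filter_upwards [hd'] with t H htmem
    exact (H (le_trans htmem.2 hb)).symm
  have hftc : ∀ a b : ℝ, a ≤ b → b ≤ 0 → η b - η a = ∫ t in a..b, deriv η t := by
    intro a b hab hb
    have e1 : η b - η a = (2:ℝ)⁻¹ • ((γ1 b - γ1 a) + (γ2 b - γ2 a)) := by
      simp only [hη]; module
    have e2 : ∫ t in a..b, g t = (2:ℝ)⁻¹ •
        ((∫ t in a..b, deriv γ1 t) + ∫ t in a..b, deriv γ2 t) := by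
      simp only [hg]
      rw [intervalIntegral.integral_smul,
        intervalIntegral.integral_add (locac_intInt h1.1 hab hb) (locac_intInt h2.1 hab hb)]
    have e3 : ∫ t in a..b, deriv η t = ∫ t in a..b, g t := by
      apply intervalIntegral.integral_congr_ae
      filter_upwards [hd', ae_ne_zero] with t H hne htmem
      rw [uIoc_of_le hab] at htmem
      exact H (le_trans htmem.2 hb)
    rw [e3, e2, e1, ← h1.1.2.2 a b hab hb, ← h2.1.2.2 a b hab hb]
  have hlocac : LocAC n η := ⟨hcont, hdint, hftc⟩
  have hη0 : η 0 = x := by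
    simp only [hη]
    rw [h1.2.1, h2.2.1, smul_add]
    module
  -- pointwise a.e. key inequality
  have key : ∀ᵐ t ∂(volume.restrict (Iic (0:ℝ))),
      ((1/2) * m * ‖deriv η t‖^2 + V (η t)) + (m/8) * ‖deriv γ1 t - deriv γ2 t‖^2
      ≤ (((1/2) * m * ‖deriv γ1 t‖^2 + V (γ1 t))
          + ((1/2) * m * ‖deriv γ2 t‖^2 + V (γ2 t)))/2 := by
    filter_upwards [hd0] with t hdt
    rw [hdt]
    set u := deriv γ1 t
    set v := deriv γ2 t
    have e1 : ‖(2:ℝ)⁻¹ • (u + v)‖^2 = (1/4) * ‖u + v‖^2 := by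
      rw [norm_smul]
      simp only [norm_inv, Real.norm_ofNat, mul_pow]
      ring
    have hpar : ‖u + v‖^2 + ‖u - v‖^2 = 2*‖u‖^2 + 2*‖v‖^2 := by
      rw [pow_two, pow_two, pow_two, pow_two]
      linarith [parallelogram_law_with_norm ℝ u v]
    have hk : (1/2) * m * ‖(2:ℝ)⁻¹ • (u + v)‖^2 + (m/8) * ‖u - v‖^2
        = ((1/2) * m * ‖u‖^2 + (1/2) * m * ‖v‖^2)/2 := by
      rw [e1]
      linear_combination (m/8) * hpar
    have hVt : V (η t) ≤ 2⁻¹ * V (γ1 t) + 2⁻¹ * V (γ2 t) := by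
      have := hVconv.2 (mem_univ (γ1 t)) (mem_univ (γ2 t))
        (by norm_num : (0:ℝ) ≤ 2⁻¹) (by norm_num : (0:ℝ) ≤ 2⁻¹) (by norm_num)
      simp only [hη, smul_add]
      exact this
    simp only [hg]
    linarith [hk, hVt]
  -- integrability of η's action integrand
  have havgint : IntegrableOn (fun t =>
      (((1/2) * m * ‖deriv γ1 t‖^2 + V (γ1 t))
        + ((1/2) * m * ‖deriv γ2 t‖^2 + V (γ2 t)))/2) (Iic (0:ℝ)) :=
    (h1.2.2.add h2.2.2).div_const 2
  have hηmeas : AEStronglyMeasurable (fun t => (1/2) * m * ‖deriv η t‖^2 + V (η t))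
      (volume.restrict (Iic (0:ℝ))) := (meas_kin η m).add (meas_pot hVc hcont)
  have hηint : IntegrableOn (fun t => (1/2) * m * ‖deriv η t‖^2 + V (η t)) (Iic (0:ℝ)) := by
    refine havgint.mono' hηmeas ?_
    filter_upwards [key] with t H
    have h1' : (0:ℝ) ≤ (1/2) * m * ‖deriv η t‖^2 + V (η t) :=
      add_nonneg (by positivity) (hVpos _)
    rw [Real.norm_eq_abs, abs_of_nonneg h1']
    have h2' : (0:ℝ) ≤ (m/8) * ‖deriv γ1 t - deriv γ2 t‖^2 := by positivity
    linarith
  have hadm : Adm n m V x η := ⟨hlocac, hη0, hηint⟩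
  -- integrability of the square difference
  have hsqint : IntegrableOn (fun t => ‖deriv γ1 t - deriv γ2 t‖^2) (Iic (0:ℝ)) := by
    have hmeas : AEStronglyMeasurable (fun t => ‖deriv γ1 t - deriv γ2 t‖^2)
        (volume.restrict (Iic (0:ℝ))) :=
      ((((measurable_deriv γ1).sub (measurable_deriv γ2)).norm.pow_const 2)).aestronglyMeasurable
    have hbd : IntegrableOn (fun t => 2*‖deriv γ1 t‖^2 + 2*‖deriv γ2 t‖^2) (Iic (0:ℝ)) :=
      ((adm_sq_int hm hVpos h1).const_mul 2).add ((adm_sq_int hm hVpos h2).const_mul 2)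
    refine hbd.mono' hmeas ?_
    filter_upwards with t
    have hnn : (0:ℝ) ≤ ‖deriv γ1 t - deriv γ2 t‖^2 := by positivity
    rw [Real.norm_eq_abs, abs_of_nonneg hnn]
    have h3 := norm_sub_le (deriv γ1 t) (deriv γ2 t)
    have h4 : ‖deriv γ1 t - deriv γ2 t‖^2 ≤ (‖deriv γ1 t‖ + ‖deriv γ2 t‖)^2 :=
      pow_le_pow_left₀ (norm_nonneg _) h3 2
    nlinarith [sq_nonneg (‖deriv γ1 t‖ - ‖deriv γ2 t‖)]
  -- the integral inequality
  refine ⟨hadm, hsqint, ?_⟩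
  have hlhsint : IntegrableOn (fun t =>
      ((1/2) * m * ‖deriv η t‖^2 + V (η t)) + (m/8) * ‖deriv γ1 t - deriv γ2 t‖^2)
      (Iic (0:ℝ)) := hηint.add (hsqint.const_mul _)
  have hmono := integral_mono_ae hlhsint havgint key
  rw [integral_add hηint (hsqint.const_mul _), MeasureTheory.integral_const_mul] at hmono
  rw [integral_div, integral_add h1.2.2 h2.2.2] at hmono
  exact hmono

end Mid


section Exp
variable {n : ℕ} {m : ℝ} {V : En n → ℝ}

theorem adm_exp (hm : 0 < m) (hVpos : ∀ y, 0 ≤ V y) (hVc : Continuous V)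
    (hV0 : V 0 = 0) (hVconv : ConvexOn ℝ univ V) (x : En n) :
    Adm n m V x (fun t => Real.exp t • x) := by
  set γ0 : ℝ → En n := fun t => Real.exp t • x with hγ0
  have hder : ∀ t, HasDerivAt γ0 (Real.exp t • x) t := fun t =>
    (Real.hasDerivAt_exp t).smul_const x
  have hderiv : deriv γ0 = fun t => Real.exp t • x := funext fun t => (hder t).deriv
  have hcont : Continuous γ0 := Real.continuous_exp.smul continuous_const
  have hdercont : Continuous (fun t : ℝ => Real.exp t • x) :=
    Real.continuous_exp.smul continuous_const
  have hlocac : LocAC n γ0 := by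
    refine ⟨hcont.continuousOn, ?_, ?_⟩
    · intro a b _ _
      rw [hderiv]
      exact hdercont.integrableOn_Icc
    · intro a b hab hb
      rw [hderiv]
      rw [intervalIntegral.integral_eq_sub_of_hasDerivAt (fun t _ => hder t)
        (hdercont.intervalIntegrable a b)]
  have hg0 : γ0 0 = x := by simp only [hγ0, Real.exp_zero, one_smul]
  refine ⟨hlocac, hg0, ?_⟩
  have hVbound : ∀ t : ℝ, t ≤ 0 → V (γ0 t) ≤ Real.exp t * V x := by
    intro t ht
    have ha : (0:ℝ) ≤ Real.exp t := (Real.exp_pos t).le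
    have ha1 : Real.exp t ≤ 1 := Real.exp_le_one_iff.2 ht
    have := hVconv.2 (mem_univ x) (mem_univ (0 : En n)) ha
      (by linarith : (0:ℝ) ≤ 1 - Real.exp t) (by ring)
    simp only [smul_zero, add_zero, hV0, smul_eq_mul, mul_zero] at this
    exact this
  have hdom : IntegrableOn (fun t => ((1/2) * m * ‖x‖^2 + V x) * Real.exp t) (Iic (0:ℝ)) :=
    (integrableOn_exp_Iic 0).const_mul _
  refine hdom.mono' ?_ ?_
  · rw [hderiv]
    have hc2 : Continuous fun t : ℝ => (1/2) * m * ‖Real.exp t • x‖^2 + V (Real.exp t • x) :=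
      (continuous_const.mul ((Real.continuous_exp.smul continuous_const).norm.pow 2)).add
        (hVc.comp hcont)
    exact hc2.aestronglyMeasurable.restrict
  · rw [ae_restrict_iff' measurableSet_Iic]
    filter_upwards with t ht
    have ha : (0:ℝ) ≤ Real.exp t := (Real.exp_pos t).le
    have ha1 : Real.exp t ≤ 1 := Real.exp_le_one_iff.2 ht
    have hnn : (0:ℝ) ≤ (1/2) * m * ‖deriv γ0 t‖^2 + V (γ0 t) :=
      add_nonneg (by positivity) (hVpos _)
    rw [Real.norm_eq_abs, abs_of_nonneg hnn, hderiv]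
    have hkin : ‖Real.exp t • x‖^2 ≤ Real.exp t * ‖x‖^2 := by
      rw [norm_smul, Real.norm_eq_abs, abs_of_nonneg ha, mul_pow]
      have : Real.exp t ^ 2 ≤ Real.exp t := by nlinarith
      nlinarith [norm_nonneg x, sq_nonneg (‖x‖)]
    have := hVbound t ht
    have hm' : (0:ℝ) ≤ (1/2) * m := by positivity
    nlinarith [hm']
  

end Exp


section Prim
variable {n : ℕ}

theorem intInt_of_loc {g : ℝ → En n}
    (hint : ∀ a b : ℝ, a ≤ b → b ≤ 0 → IntegrableOn g (Icc a b))
    {a b : ℝ} (ha : a ≤ 0) (hb : b ≤ 0) : IntervalIntegrable g volume a b := by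
  have h1 : IntegrableOn g (uIcc a b) := by
    rw [uIcc]
    exact hint _ _ (min_le_max) (by simp [ha, hb])
  exact h1.intervalIntegrable

theorem primitive_locac {g : ℝ → En n} (x : En n)
    (hint : ∀ a b : ℝ, a ≤ b → b ≤ 0 → IntegrableOn g (Icc a b)) :
    LocAC n (fun t => x + ∫ u in (0:ℝ)..t, g u) ∧
    (fun t => x + ∫ u in (0:ℝ)..t, g u) 0 = x ∧
    (∀ᵐ t : ℝ, t < 0 → deriv (fun t => x + ∫ u in (0:ℝ)..t, g u) t = g t) := by
  set Γ : ℝ → En n := fun t => x + ∫ u in (0:ℝ)..t, g u with hΓ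
  have hder : ∀ᵐ t : ℝ, t < 0 → HasDerivAt Γ (g t) t := by
    filter_upwards [primitive_ae hint] with t H ht0
    exact (H ht0).const_add x
  have hderiv : ∀ᵐ t : ℝ, t < 0 → deriv Γ t = g t := by
    filter_upwards [hder] with t H ht0
    exact (H ht0).deriv
  have hcont : ContinuousOn Γ (Iic (0:ℝ)) := by
    intro t ht
    set a : ℝ := t - 1 with ha
    have hta : a ≤ 0 := by simp only [ha]; simp only [mem_Iic] at ht; linarith
    have h1 : ContinuousOn
        (fun s => x + ((∫ u in Ioc a s, g u) - ∫ u in a..(0:ℝ), g u)) (Icc a 0) :=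
      continuousOn_const.add ((intervalIntegral.continuousOn_primitive
        (hint a 0 hta le_rfl)).sub continuousOn_const)
    have heq : EqOn Γ
        (fun s => x + ((∫ u in Ioc a s, g u) - ∫ u in a..(0:ℝ), g u)) (Icc a 0) := by
      intro s hs
      simp only [hΓ]
      congr 1
      rw [← intervalIntegral.integral_of_le hs.1]
      rw [← intervalIntegral.integral_interval_sub_left
        (intInt_of_loc hint hta hs.2) (intInt_of_loc hint hta le_rfl)]
    have h2 : ContinuousOn Γ (Icc a 0) := h1.congr heq
    have h3 : ContinuousWithinAt Γ (Icc a 0) t := h2 t ⟨by simp [ha], mem_Iic.1 ht⟩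
    refine h3.mono_of_mem_nhdsWithin ?_
    rw [mem_nhdsWithin]
    refine ⟨Ioi a, isOpen_Ioi, by simp [ha], ?_⟩
    rintro u ⟨hu1, hu2⟩
    exact ⟨le_of_lt hu1, mem_Iic.1 hu2⟩
  have hdint : ∀ a b : ℝ, a ≤ b → b ≤ 0 → IntegrableOn (deriv Γ) (Icc a b) := by
    intro a b hab hb
    refine (hint a b hab hb).congr ?_
    rw [EventuallyEq, ae_restrict_iff' measurableSet_Icc]
    filter_upwards [hderiv, ae_ne_zero] with s H hne hsmem
    exact (H (lt_of_le_of_ne (le_trans hsmem.2 hb) hne)).symm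
  have hftc : ∀ a b : ℝ, a ≤ b → b ≤ 0 → Γ b - Γ a = ∫ t in a..b, deriv Γ t := by
    intro a b hab hb
    have ha0 : a ≤ 0 := le_trans hab hb
    have e1 : Γ b - Γ a = ∫ t in a..b, g t := by
      simp only [hΓ]
      rw [add_sub_add_left_eq_sub]
      exact intervalIntegral.integral_interval_sub_left
        (intInt_of_loc hint le_rfl hb) (intInt_of_loc hint le_rfl ha0)
    rw [e1]
    apply intervalIntegral.integral_congr_ae
    filter_upwards [hderiv, ae_ne_zero] with s H hne hsmem
    rw [uIoc_of_le hab] at hsmem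
    exact (H (lt_of_le_of_ne (le_trans hsmem.2 hb) hne)).symm
  exact ⟨⟨hcont, hdint, hftc⟩, by simp [hΓ], hderiv⟩

end Prim


section L2
variable {n : ℕ}

theorem memLp_sub_restrict {h : ℝ → En n}
    (hh : MemLp h 2 (volume.restrict (Iic (0:ℝ)))) {s : Set ℝ}
    (hs : MeasurableSet s) (hsub : s ⊆ Iic (0:ℝ)) :
    MemLp h 2 (volume.restrict s) := by
  have h1 := hh.restrict s
  rwa [Measure.restrict_restrict hs, inter_eq_self_of_subset_left hsub] at h1

instance finite_Ioc_restrict (a b : ℝ) : IsFiniteMeasure (volume.restrict (Ioc a b)) :=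
  ⟨by rw [Measure.restrict_apply_univ]; exact measure_Ioc_lt_top⟩

instance finite_Icc_restrict (a b : ℝ) : IsFiniteMeasure (volume.restrict (Icc a b)) :=
  ⟨by rw [Measure.restrict_apply_univ]; exact measure_Icc_lt_top⟩

theorem memLp_intOn {h : ℝ → En n}
    (hh : MemLp h 2 (volume.restrict (Iic (0:ℝ)))) :
    ∀ a b : ℝ, a ≤ b → b ≤ 0 → IntegrableOn h (Icc a b) := by
  intro a b hab hb
  have h1 := memLp_sub_restrict hh (measurableSet_Icc (a := a) (b := b))
    (fun u hu => mem_Iic.2 (le_trans hu.2 hb))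
  exact memLp_one_iff_integrable.1 (h1.mono_exponent (by norm_num))

theorem l2_line_bound {h : ℝ → En n}
    (hh : MemLp h 2 (volume.restrict (Iic (0:ℝ)))) {t : ℝ} (ht : t ≤ 0) :
    ‖∫ u in Ioc t 0, h u‖ ≤
      Real.sqrt (∫ u in Iic (0:ℝ), ‖h u‖^2) * Real.sqrt (-t) := by
  have hsub : Ioc t 0 ⊆ Iic (0:ℝ) := fun u hu => mem_Iic.2 hu.2
  have hres : MemLp h 2 (volume.restrict (Ioc t 0)) :=
    memLp_sub_restrict hh measurableSet_Ioc hsub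
  have hn2 : Integrable (fun u => ‖h u‖^2) (volume.restrict (Iic (0:ℝ))) :=
    (memLp_two_iff_integrable_sq_norm hh.aestronglyMeasurable).1 hh
  have hpq : Real.HolderConjugate 2 2 := Real.HolderConjugate.two_two
  have hof : (ENNReal.ofReal 2) = (2 : ℝ≥0∞) := by
    rw [show (2:ℝ) = ((2:ℕ):ℝ) by norm_num, ENNReal.ofReal_natCast]; norm_num
  have hmemf : MemLp (fun u => ‖h u‖) (ENNReal.ofReal 2) (volume.restrict (Ioc t 0)) := by
    rw [hof]; exact hres.norm
  have hmemg : MemLp (fun _ : ℝ => (1:ℝ)) (ENNReal.ofReal 2) (volume.restrict (Ioc t 0)) :=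
    memLp_const 1
  have hH := MeasureTheory.integral_mul_le_Lp_mul_Lq_of_nonneg hpq
    (Filter.Eventually.of_forall fun u => norm_nonneg _)
    (Filter.Eventually.of_forall fun _ => zero_le_one) hmemf hmemg
  simp only [mul_one, Real.one_rpow] at hH
  have e0 : ∀ u : ℝ, ‖h u‖ ^ (2:ℝ) = ‖h u‖^2 := fun u => by
    rw [show (2:ℝ) = ((2:ℕ):ℝ) by norm_num, Real.rpow_natCast]
  simp only [e0] at hH
  have e1 : ∫ _ in Ioc t 0, (1:ℝ) = -t := by
    rw [setIntegral_const, measureReal_def, smul_eq_mul, mul_one, Real.volume_Ioc,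
      ENNReal.toReal_ofReal (by linarith : (0:ℝ) ≤ 0 - t)]
    ring
  rw [e1] at hH
  have hmono : ∫ u in Ioc t 0, ‖h u‖^2 ≤ ∫ u in Iic (0:ℝ), ‖h u‖^2 := by
    apply setIntegral_mono_set hn2
    · filter_upwards with u using sq_nonneg _
    · exact HasSubset.Subset.eventuallyLE hsub
  have hIocnn : (0:ℝ) ≤ ∫ u in Ioc t 0, ‖h u‖^2 :=
    integral_nonneg fun u => sq_nonneg _
  calc ‖∫ u in Ioc t 0, h u‖ ≤ ∫ u in Ioc t 0, ‖h u‖ := norm_integral_le_integral_norm _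
    _ ≤ (∫ u in Ioc t 0, ‖h u‖^2) ^ ((1:ℝ)/2) * (-t) ^ ((1:ℝ)/2) := hH
    _ ≤ (∫ u in Iic (0:ℝ), ‖h u‖^2) ^ ((1:ℝ)/2) * (-t) ^ ((1:ℝ)/2) := by
        exact mul_le_mul_of_nonneg_right
          (Real.rpow_le_rpow hIocnn hmono (by norm_num))
          (Real.rpow_nonneg (by linarith) _)
    _ = Real.sqrt (∫ u in Iic (0:ℝ), ‖h u‖^2) * Real.sqrt (-t) := by
        rw [Real.sqrt_eq_rpow, Real.sqrt_eq_rpow]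

end L2

end IPaux

set_option maxHeartbeats 1000000 in
/-- For every boundary point `x ∈ ℝⁿ`, the inverted-potential action
functional `I_ip` admits a unique minimizer `γ_x` over the admissible class `A_x`
(uniqueness meaning agreement on `(-∞, 0]`). -/
theorem stmt_0 (n : ℕ) (hn : 1 ≤ n) (m : ℝ) (hm : 0 < m)
    (ω : Fin n → ℝ) (hω : ∀ i, 0 < ω i)
    (A : En n → ℝ) (hA : ContDiff ℝ (⊤ : ℕ∞) A) (hA0 : A 0 = 0)
    (hA1 : fderiv ℝ A 0 = 0) (hA2 : fderiv ℝ (fderiv ℝ A) 0 = 0)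
    (lam : Fin n → ℝ) (hlam : ∀ i, (lam i)^2 < (ω i)^2)
    (hAcoer : ∀ x : En n, -(1/2) * m * ∑ i, (lam i)^2 * (x i)^2 ≤ A x)
    (V : En n → ℝ)
    (hV : ∀ x : En n, V x = (1/2) * m * (∑ i, (ω i)^2 * (x i)^2) + A x)
    (hVpos : ∀ x, 0 ≤ V x) (hVzero : ∀ x : En n, V x = 0 ↔ x = 0)
    (hVconv : ConvexOn ℝ univ V) :
    ∀ x : En n, ∃ γx : ℝ → En n, Adm n m V x γx ∧
      (∀ γ, Adm n m V x γ → Iip n m V γx ≤ Iip n m V γ) ∧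
      (∀ γ, Adm n m V x γ → (∀ γ', Adm n m V x γ' → Iip n m V γ ≤ Iip n m V γ') →
        EqOn γ γx (Iic (0:ℝ))) := by
  intro x
  -- continuity of V
  have hVc : Continuous V := by
    have h1 : Continuous fun y : En n =>
        (1/2) * m * (∑ i, (ω i)^2 * (y i)^2) + A y := by
      refine (continuous_const.mul ?_).add hA.continuous
      refine continuous_finset_sum _ fun i _ => continuous_const.mul ?_
      exact ((continuous_apply i).comp (PiLp.continuous_ofLp 2 fun _ => ℝ)).pow 2
    have he : V = fun y : En n =>
        (1/2) * m * (∑ i, (ω i)^2 * (y i)^2) + A y := funext hV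
    rw [he]; exact h1
  have hV0 : V 0 = 0 := (hVzero 0).2 rfl
  -- nonemptiness of the admissible class
  have hne : Adm n m V x (fun t => Real.exp t • x) :=
    IPaux.adm_exp hm hVpos hVc hV0 hVconv x
  set S : Set ℝ := Iip n m V '' {γ | Adm n m V x γ} with hS
  have hSne : S.Nonempty := ⟨_, ⟨_, hne, rfl⟩⟩
  have hSlb : ∀ r ∈ S, (0:ℝ) ≤ r := by
    rintro r ⟨γ, hγ, rfl⟩
    exact IPaux.iip_nonneg hm hVpos
  have hbdd : BddBelow S := ⟨0, fun r hr => hSlb r hr⟩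
  set c : ℝ := sInf S with hc
  have hcle : ∀ γ, Adm n m V x γ → c ≤ Iip n m V γ := fun γ hγ =>
    csInf_le hbdd ⟨γ, hγ, rfl⟩
  have hc0 : (0:ℝ) ≤ c := le_csInf hSne hSlb
  -- minimizing sequence
  have hseq : ∀ k : ℕ, ∃ γ, Adm n m V x γ ∧ Iip n m V γ < c + 1/((k:ℝ)+1) := by
    intro k
    have hpos : (0:ℝ) < 1/((k:ℝ)+1) := by positivity
    obtain ⟨r, hr, hrlt⟩ := exists_lt_of_csInf_lt hSne (by linarith : c < c + 1/((k:ℝ)+1))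
    obtain ⟨γ, hγ, rfl⟩ := hr
    exact ⟨γ, hγ, hrlt⟩
  choose γs hγs hlt using hseq
  have hmem : ∀ k, MemLp (deriv (γs k)) 2 (volume.restrict (Iic (0:ℝ))) := fun k =>
    IPaux.memLp_deriv hm hVpos (hγs k)
  set G : ℕ → Lp (En n) 2 (volume.restrict (Iic (0:ℝ))) := fun k => (hmem k).toLp _ with hG
  -- quantitative Cauchy estimate
  have hest : ∀ k l : ℕ, ∫ t in Iic (0:ℝ), ‖deriv (γs k) t - deriv (γs l) t‖^2
      ≤ (4/m) * (1/((k:ℝ)+1) + 1/((l:ℝ)+1)) := by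
    intro k l
    obtain ⟨hadm, hsq, hineq⟩ := IPaux.midpoint_est hm hVpos hVc hVconv (hγs k) (hγs l)
    have h1 : c ≤ Iip n m V (fun t => (2:ℝ)⁻¹ • (γs k t + γs l t)) := hcle _ hadm
    have h2 := hlt k
    have h3 := hlt l
    have h4 : (m/8) * ∫ t in Iic (0:ℝ), ‖deriv (γs k) t - deriv (γs l) t‖^2
        ≤ (1/((k:ℝ)+1) + 1/((l:ℝ)+1))/2 := by linarith
    have h5 : (0:ℝ) < 8/m := by positivity
    calc ∫ t in Iic (0:ℝ), ‖deriv (γs k) t - deriv (γs l) t‖^2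
        = (8/m) * ((m/8) * ∫ t in Iic (0:ℝ), ‖deriv (γs k) t - deriv (γs l) t‖^2) := by
          field_simp
      _ ≤ (8/m) * ((1/((k:ℝ)+1) + 1/((l:ℝ)+1))/2) := by
          exact mul_le_mul_of_nonneg_left h4 h5.le
      _ = (4/m) * (1/((k:ℝ)+1) + 1/((l:ℝ)+1)) := by ring
  -- identify Lp distances with integrals
  have hGdiff : ∀ k l : ℕ, ‖G k - G l‖^2
      = ∫ t in Iic (0:ℝ), ‖deriv (γs k) t - deriv (γs l) t‖^2 := by
    intro k l
    rw [IPaux.lp_normsq (G k - G l)]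
    apply integral_congr_ae
    have h1 : (⇑(G k - G l) : ℝ → En n)
        =ᵐ[volume.restrict (Iic (0:ℝ))] fun t => deriv (γs k) t - deriv (γs l) t := by
      filter_upwards [Lp.coeFn_sub (G k) (G l), (hmem k).coeFn_toLp, (hmem l).coeFn_toLp]
        with t e1 e2 e3
      rw [e1, Pi.sub_apply, e2, e3]
    filter_upwards [h1] with t e1
    rw [e1]
  -- Cauchy sequence in L²
  have hcauchy : CauchySeq G := by
    rw [Metric.cauchySeq_iff]
    intro ε hε
    obtain ⟨N, hN⟩ := exists_nat_one_div_lt (show (0:ℝ) < m*ε^2/8 by positivity)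
    refine ⟨N, fun k hk l hl => ?_⟩
    have hbnd : ∀ j : ℕ, N ≤ j → 1/((j:ℝ)+1) ≤ 1/((N:ℝ)+1) := by
      intro j hj
      apply one_div_le_one_div_of_le (by positivity)
      have : (N:ℝ) ≤ (j:ℝ) := Nat.cast_le.2 hj
      linarith
    have h1 : ‖G k - G l‖^2 ≤ (8/m) * (1/((N:ℝ)+1)) := by
      rw [hGdiff k l]
      calc ∫ t in Iic (0:ℝ), ‖deriv (γs k) t - deriv (γs l) t‖^2
          ≤ (4/m) * (1/((k:ℝ)+1) + 1/((l:ℝ)+1)) := hest k l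
        _ ≤ (4/m) * (1/((N:ℝ)+1) + 1/((N:ℝ)+1)) := by
            have := hbnd k hk; have := hbnd l hl
            apply mul_le_mul_of_nonneg_left (by linarith) (by positivity)
        _ = (8/m) * (1/((N:ℝ)+1)) := by ring
    have h2 : (8/m) * (1/((N:ℝ)+1)) < ε^2 := by
      have h3 : (0:ℝ) < 8/m := by positivity
      calc (8/m) * (1/((N:ℝ)+1)) < (8/m) * (m*ε^2/8) :=
            mul_lt_mul_of_pos_left hN h3
        _ = ε^2 := by field_simp
    rw [dist_eq_norm]
    nlinarith [norm_nonneg (G k - G l)]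
  obtain ⟨Glim, hGlim⟩ := cauchySeq_tendsto_of_complete hcauchy
  set g : ℝ → En n := ⇑Glim with hgdef
  have hgmem : MemLp g 2 (volume.restrict (Iic (0:ℝ))) := Lp.memLp Glim
  have hgloc : ∀ a b : ℝ, a ≤ b → b ≤ 0 → IntegrableOn g (Icc a b) := IPaux.memLp_intOn hgmem
  obtain ⟨hΓlocac, hΓ0, hΓderiv⟩ := IPaux.primitive_locac (n := n) x hgloc
  set Γ : ℝ → En n := fun t => x + ∫ u in (0:ℝ)..t, g u with hΓdef
  have hΓd0 : ∀ᵐ t ∂(volume.restrict (Iic (0:ℝ))), deriv Γ t = g t := by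
    rw [ae_restrict_iff' measurableSet_Iic]
    filter_upwards [hΓderiv, IPaux.ae_ne_zero] with t H hne htmem
    exact H (lt_of_le_of_ne htmem hne)
  -- difference with limit in L²
  have hGdiffl : ∀ k : ℕ, ‖G k - Glim‖^2
      = ∫ t in Iic (0:ℝ), ‖deriv (γs k) t - g t‖^2 := by
    intro k
    rw [IPaux.lp_normsq (G k - Glim)]
    apply integral_congr_ae
    have h1 : (⇑(G k - Glim) : ℝ → En n)
        =ᵐ[volume.restrict (Iic (0:ℝ))] fun t => deriv (γs k) t - g t := by
      filter_upwards [Lp.coeFn_sub (G k) Glim, (hmem k).coeFn_toLp] with t e1 e2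
      rw [e1, Pi.sub_apply, e2]
    filter_upwards [h1] with t e1
    rw [e1]
  have hGnorm0 : Tendsto (fun k => ‖G k - Glim‖) atTop (𝓝 0) :=
    tendsto_iff_norm_sub_tendsto_zero.1 hGlim
  -- pointwise convergence of the curves
  have hptwise : ∀ t : ℝ, t ≤ 0 → Tendsto (fun k => γs k t) atTop (𝓝 (Γ t)) := by
    intro t ht
    rw [tendsto_iff_norm_sub_tendsto_zero]
    have hb : ∀ k : ℕ, ‖γs k t - Γ t‖ ≤ ‖G k - Glim‖ * Real.sqrt (-t) := by
      intro k
      have hrep : γs k t = x + ∫ u in (0:ℝ)..t, deriv (γs k) u := by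
        have := IPaux.locac_rep (hγs k).1 ht
        rwa [(hγs k).2.1] at this
      have hsubmem : MemLp (fun u => deriv (γs k) u - g u) 2
          (volume.restrict (Iic (0:ℝ))) := (hmem k).sub hgmem
      have hd1 : IntervalIntegrable (deriv (γs k)) volume 0 t :=
        (IPaux.locac_intInt (hγs k).1 ht le_rfl).symm
      have hd2 : IntervalIntegrable g volume 0 t :=
        (IPaux.intInt_of_loc hgloc ht le_rfl).symm
      have e1 : γs k t - Γ t = ∫ u in (0:ℝ)..t, (deriv (γs k) u - g u) := by
        rw [hrep, hΓdef]
        simp only [add_sub_add_left_eq_sub]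
        rw [intervalIntegral.integral_sub hd1 hd2]
      have e2 : ∫ u in (0:ℝ)..t, (deriv (γs k) u - g u)
          = -∫ u in t..(0:ℝ), (deriv (γs k) u - g u) := intervalIntegral.integral_symm _ _
      have e3 : ∫ u in t..(0:ℝ), (deriv (γs k) u - g u)
          = ∫ u in Ioc t 0, (deriv (γs k) u - g u) := intervalIntegral.integral_of_le ht
      rw [e1, e2, norm_neg, e3]
      have hbound := IPaux.l2_line_bound hsubmem ht
      calc ‖∫ u in Ioc t 0, (deriv (γs k) u - g u)‖
          ≤ Real.sqrt (∫ u in Iic (0:ℝ), ‖deriv (γs k) u - g u‖^2) * Real.sqrt (-t) :=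
            hbound
        _ = ‖G k - Glim‖ * Real.sqrt (-t) := by
            rw [← hGdiffl k, Real.sqrt_sq (norm_nonneg _)]
    have hz : Tendsto (fun k => ‖G k - Glim‖ * Real.sqrt (-t)) atTop (𝓝 0) := by
      have h0 := hGnorm0.mul_const (Real.sqrt (-t))
      rwa [zero_mul] at h0
    exact squeeze_zero (fun k => norm_nonneg _) hb hz
  -- kinetic energies
  have hkin : ∀ k : ℕ, ∫ t in Iic (0:ℝ), (1/2) * m * ‖deriv (γs k) t‖^2
      = (1/2) * m * ‖G k‖^2 := by
    intro k
    rw [IPaux.lp_normsq (G k)]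
    rw [← MeasureTheory.integral_const_mul]
    apply integral_congr_ae
    filter_upwards [(hmem k).coeFn_toLp] with t e1
    rw [e1]
  have hgsq : Integrable (fun t => ‖g t‖^2) (volume.restrict (Iic (0:ℝ))) :=
    (memLp_two_iff_integrable_sq_norm hgmem.aestronglyMeasurable).1 hgmem
  have hkinΓ : ∫ t in Iic (0:ℝ), (1/2) * m * ‖deriv Γ t‖^2 = (1/2) * m * ‖Glim‖^2 := by
    rw [IPaux.lp_normsq Glim, ← MeasureTheory.integral_const_mul]
    apply integral_congr_ae
    filter_upwards [hΓd0] with t e1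
    rw [e1]
  have hkinconv : Tendsto (fun k => (1/2) * m * ‖G k‖^2) atTop
      (𝓝 ((1/2) * m * ‖Glim‖^2)) := by
    have h1 : Tendsto (fun k => ‖G k‖) atTop (𝓝 ‖Glim‖) := hGlim.norm
    exact (h1.pow 2).const_mul _
  -- potential part, Fatou
  have hpotint : ∀ k : ℕ, IntegrableOn (fun t => V (γs k t)) (Iic (0:ℝ)) := fun k =>
    IPaux.adm_pot_int hm hVpos hVc (hγs k)
  set pot : ℕ → ℝ := fun k => ∫ t in Iic (0:ℝ), V (γs k t) with hpotdef
  set L : ℝ≥0∞ := Filter.liminf (fun k => ENNReal.ofReal (pot k)) atTop with hLdef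
  have hofReal : ∀ k : ℕ, ENNReal.ofReal (pot k)
      = ∫⁻ t in Iic (0:ℝ), ENNReal.ofReal (V (γs k t)) := fun k =>
    MeasureTheory.ofReal_integral_eq_lintegral_ofReal (hpotint k)
      (Filter.Eventually.of_forall fun t => hVpos _)
  have hmeasV : ∀ k : ℕ, AEMeasurable (fun t => ENNReal.ofReal (V (γs k t)))
      (volume.restrict (Iic (0:ℝ))) := fun k =>
    (((hVc.comp_continuousOn (hγs k).1.1).aestronglyMeasurable
      measurableSet_Iic).aemeasurable).ennreal_ofReal
  have hfatou : ∫⁻ t in Iic (0:ℝ), ENNReal.ofReal (V (Γ t)) ≤ L := by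
    have hptV : ∀ᵐ t ∂(volume.restrict (Iic (0:ℝ))),
        ENNReal.ofReal (V (Γ t))
          = Filter.liminf (fun k => ENNReal.ofReal (V (γs k t))) atTop := by
      rw [ae_restrict_iff' measurableSet_Iic]
      filter_upwards with t htmem
      have h1 : Tendsto (fun k => ENNReal.ofReal (V (γs k t))) atTop
          (𝓝 (ENNReal.ofReal (V (Γ t)))) :=
        (ENNReal.continuous_ofReal.tendsto _).comp
          ((hVc.tendsto _).comp (hptwise t htmem))
      exact h1.liminf_eq.symm
    calc ∫⁻ t in Iic (0:ℝ), ENNReal.ofReal (V (Γ t))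
        = ∫⁻ t in Iic (0:ℝ), Filter.liminf (fun k => ENNReal.ofReal (V (γs k t))) atTop :=
          lintegral_congr_ae hptV
      _ ≤ Filter.liminf (fun k => ∫⁻ t in Iic (0:ℝ), ENNReal.ofReal (V (γs k t))) atTop :=
          MeasureTheory.lintegral_liminf_le' hmeasV
      _ = L := by
          rw [hLdef]
          apply Filter.liminf_congr
          filter_upwards with k
          rw [hofReal k]
  have hpotle : ∀ k : ℕ, pot k ≤ c + 1 := by
    intro k
    have hsplit := IPaux.iip_split hm hVpos hVc (hγs k)
    have hknn : 0 ≤ ∫ t in Iic (0:ℝ), (1/2) * m * ‖deriv (γs k) t‖^2 :=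
      IPaux.kin_nonneg hm
    have h2 := hlt k
    have h3 : 1/((k:ℝ)+1) ≤ 1 := by
      rw [div_le_one (by positivity)]
      simp
    simp only [hpotdef]
    linarith
  have hLfin : L ≤ ENNReal.ofReal (c+1) := by
    rw [hLdef]
    have h1 : ∀ k : ℕ, ENNReal.ofReal (pot k) ≤ ENNReal.ofReal (c+1) := fun k =>
      ENNReal.ofReal_le_ofReal (hpotle k)
    calc Filter.liminf (fun k => ENNReal.ofReal (pot k)) atTop
        ≤ Filter.liminf (fun _ : ℕ => ENNReal.ofReal (c+1)) atTop :=
          Filter.liminf_le_liminf (Filter.Eventually.of_forall h1)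
      _ = ENNReal.ofReal (c+1) := Filter.liminf_const _
  have hLne : L ≠ ⊤ := ne_top_of_le_ne_top ENNReal.ofReal_ne_top hLfin
  -- integrability of the potential along Γ
  have hVΓmeas : AEStronglyMeasurable (fun t => V (Γ t)) (volume.restrict (Iic (0:ℝ))) :=
    IPaux.meas_pot hVc hΓlocac.1
  have hVΓint : IntegrableOn (fun t => V (Γ t)) (Iic (0:ℝ)) := by
    refine ⟨hVΓmeas, ?_⟩
    have he : ∀ t : ℝ, ‖V (Γ t)‖ₑ = ENNReal.ofReal (V (Γ t)) := fun t =>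
      Real.enorm_eq_ofReal (hVpos _)
    have hcalc : ∫⁻ t in Iic (0:ℝ), ‖V (Γ t)‖ₑ
        = ∫⁻ t in Iic (0:ℝ), ENNReal.ofReal (V (Γ t)) := lintegral_congr fun t => he t
    rw [HasFiniteIntegral, hcalc]
    exact lt_of_le_of_lt (le_trans hfatou hLfin) ENNReal.ofReal_lt_top
  have hkinΓint : IntegrableOn (fun t => (1/2) * m * ‖deriv Γ t‖^2) (Iic (0:ℝ)) := by
    refine (hgsq.const_mul ((1/2)*m)).congr ?_
    filter_upwards [hΓd0] with t e1
    rw [e1]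
  have hΓadm : Adm n m V x Γ := ⟨hΓlocac, hΓ0, hkinΓint.add hVΓint⟩
  -- potential value bound
  have hPΓ : ∫ t in Iic (0:ℝ), V (Γ t) ≤ L.toReal := by
    have h1 : ENNReal.ofReal (∫ t in Iic (0:ℝ), V (Γ t))
        = ∫⁻ t in Iic (0:ℝ), ENNReal.ofReal (V (Γ t)) :=
      MeasureTheory.ofReal_integral_eq_lintegral_ofReal hVΓint
        (Filter.Eventually.of_forall fun t => hVpos _)
    have h2 : ENNReal.ofReal (∫ t in Iic (0:ℝ), V (Γ t)) ≤ L := h1 ▸ hfatou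
    have h3 := ENNReal.toReal_mono hLne h2
    rwa [ENNReal.toReal_ofReal (IPaux.pot_nonneg hVpos)] at h3
  -- the limit curve is a minimizer
  have hIipΓ : Iip n m V Γ ≤ c := by
    apply le_of_forall_pos_le_add
    intro ε hε
    have hε3 : (0:ℝ) < ε/3 := by linarith
    have hev1 : ∀ᶠ k in atTop, |(1/2) * m * ‖G k‖^2 - (1/2) * m * ‖Glim‖^2| < ε/3 := by
      obtain ⟨N, hN⟩ := Metric.tendsto_atTop.1 hkinconv (ε/3) hε3
      refine eventually_atTop.2 ⟨N, fun k hk => ?_⟩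
      have := hN k hk
      rwa [Real.dist_eq] at this
    have hev2 : ∀ᶠ k : ℕ in atTop, 1/((k:ℝ)+1) < ε/3 := by
      obtain ⟨N, hN⟩ := exists_nat_one_div_lt hε3
      refine eventually_atTop.2 ⟨N, fun k hk => ?_⟩
      have h1 : 1/((k:ℝ)+1) ≤ 1/((N:ℝ)+1) := by
        apply one_div_le_one_div_of_le (by positivity)
        have : (N:ℝ) ≤ (k:ℝ) := Nat.cast_le.2 hk
        linarith
      linarith
    have hev3 : ∀ᶠ k in atTop, L ≤ ENNReal.ofReal (pot k) + ENNReal.ofReal (ε/3) := by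
      by_cases hcase : L ≤ ENNReal.ofReal (ε/3)
      · exact Filter.Eventually.of_forall fun k => le_trans hcase le_add_self
      · push_neg at hcase
        have hL0 : L ≠ 0 := by
          intro h0
          rw [h0] at hcase
          exact (not_lt_of_ge zero_le) hcase
        have hofne : ENNReal.ofReal (ε/3) ≠ 0 := by
          rw [Ne, ENNReal.ofReal_eq_zero]
          push_neg
          linarith
        have hsub : L - ENNReal.ofReal (ε/3) < L := ENNReal.sub_lt_self hLne hL0 hofne
        have hsub' : L - ENNReal.ofReal (ε/3)
            < Filter.liminf (fun k => ENNReal.ofReal (pot k)) atTop := by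
          rw [← hLdef]; exact hsub
        filter_upwards [Filter.eventually_lt_of_lt_liminf hsub'] with k hk
        exact tsub_le_iff_right.1 hk.le
    obtain ⟨k, hk1, hk2', hk3'⟩ := (hev1.and (hev2.and hev3)).exists
    have hsplitk := IPaux.iip_split hm hVpos hVc (hγs k)
    have hsplitΓ := IPaux.iip_split hm hVpos hVc hΓadm
    have hpotnn : (0:ℝ) ≤ pot k := IPaux.pot_nonneg hVpos
    have e1 : ∫ t in Iic (0:ℝ), (1/2) * m * ‖deriv Γ t‖^2 ≤ (1/2)*m*‖G k‖^2 + ε/3 := by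
      rw [hkinΓ]
      have := abs_lt.1 hk1
      linarith [this.1, this.2]
    have e2 : L.toReal ≤ pot k + ε/3 := by
      have h4 : L ≤ ENNReal.ofReal (pot k + ε/3) := by
        rw [ENNReal.ofReal_add hpotnn hε3.le]
        exact hk3'
      have h5 := ENNReal.toReal_mono ENNReal.ofReal_ne_top h4
      rwa [ENNReal.toReal_ofReal (by linarith)] at h5
    have e3 : (1/2)*m*‖G k‖^2 + pot k < c + ε/3 := by
      rw [← hkin k]
      have h6 := hlt k
      have h7 : Iip n m V (γs k)
          = (∫ t in Iic (0:ℝ), (1/2) * m * ‖deriv (γs k) t‖^2) + pot k := hsplitk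
      linarith
    calc Iip n m V Γ
        = (∫ t in Iic (0:ℝ), (1/2) * m * ‖deriv Γ t‖^2) + ∫ t in Iic (0:ℝ), V (Γ t) :=
          hsplitΓ
      _ ≤ ((1/2)*m*‖G k‖^2 + ε/3) + (pot k + ε/3) := by linarith [hPΓ, e1, e2]
      _ ≤ c + ε := by linarith [e3]
  -- conclusion
  refine ⟨Γ, hΓadm, fun γ hγ => le_trans hIipΓ (hcle γ hγ), ?_⟩
  intro γ hγ hγmin
  have hcΓ : c ≤ Iip n m V Γ := hcle Γ hΓadm
  have hγc : Iip n m V γ = c := le_antisymm (le_trans (hγmin Γ hΓadm) hIipΓ) (hcle γ hγ)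
  have hΓc : Iip n m V Γ = c := le_antisymm hIipΓ hcΓ
  obtain ⟨hadmM, hsqM, hineqM⟩ := IPaux.midpoint_est hm hVpos hVc hVconv hγ hΓadm
  have h0 : c ≤ Iip n m V (fun t => (2:ℝ)⁻¹ • (γ t + Γ t)) := hcle _ hadmM
  have hint0 : ∫ t in Iic (0:ℝ), ‖deriv γ t - deriv Γ t‖^2 ≤ 0 := by
    have hA' : (m/8) * ∫ t in Iic (0:ℝ), ‖deriv γ t - deriv Γ t‖^2 ≤ 0 := by linarith
    by_contra hI
    push_neg at hI
    nlinarith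
  have hIeq : ∫ t in Iic (0:ℝ), ‖deriv γ t - deriv Γ t‖^2 = 0 :=
    le_antisymm hint0 (integral_nonneg fun t => sq_nonneg _)
  have hae0 : (fun t => ‖deriv γ t - deriv Γ t‖^2)
      =ᵐ[volume.restrict (Iic (0:ℝ))] 0 :=
    (MeasureTheory.integral_eq_zero_iff_of_nonneg
      (fun t => sq_nonneg _) hsqM).1 hIeq
  have haed : ∀ᵐ t ∂(volume.restrict (Iic (0:ℝ))), deriv γ t = deriv Γ t := by
    filter_upwards [hae0] with t ht
    have h1 : ‖deriv γ t - deriv Γ t‖^2 = 0 := ht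
    have h2 : deriv γ t - deriv Γ t = 0 := by
      rwa [pow_eq_zero_iff (two_ne_zero), norm_eq_zero] at h1
    exact sub_eq_zero.1 h2
  intro t ht
  have hrepγ : γ t = x + ∫ u in (0:ℝ)..t, deriv γ u := by
    have := IPaux.locac_rep hγ.1 ht
    rwa [hγ.2.1] at this
  have hcongr : ∫ u in (0:ℝ)..t, deriv γ u = ∫ u in (0:ℝ)..t, g u := by
    apply intervalIntegral.integral_congr_ae
    have hd1 := (ae_restrict_iff' measurableSet_Iic).1 haed
    have hd2 := (ae_restrict_iff' measurableSet_Iic).1 hΓd0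
    filter_upwards [hd1, hd2] with s H1 H2 hs
    have hsmem : s ∈ Iic (0:ℝ) := by
      rw [uIoc_of_ge ht] at hs
      exact mem_Iic.2 hs.2
    rw [H1 hsmem, H2 hsmem]
  show γ t = Γ t
  rw [hrepγ, hcongr]
end
end

section
/- For every x ∈ ℝⁿ, the minimizing curve γ_x of the inverted-potential action satisfies lim_{t → -∞} γ_x(t) = (0, …, 0). -/
open MeasureTheory Set Filter

noncomputable section

lemma tail_tendsto' (f : ℝ → ℝ) (hf : IntegrableOn f (Iic (0:ℝ))) :
    Tendsto (fun T => ∫ t in Iic T, f t) atBot (nhds (0:ℝ)) := by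
  have h1 : Tendsto (fun T : ℝ => ∫ t in T..0, f t) atBot
      (nhds (∫ t in Iic (0:ℝ), f t)) :=
    intervalIntegral_tendsto_integral_Iic 0 hf tendsto_id
  have h2 : Tendsto (fun T : ℝ => (∫ t in Iic (0:ℝ), f t) - ∫ t in T..0, f t) atBot
      (nhds ((∫ t in Iic (0:ℝ), f t) - ∫ t in Iic (0:ℝ), f t)) :=
    tendsto_const_nhds.sub h1
  rw [sub_self] at h2
  refine h2.congr' ?_
  filter_upwards [eventually_le_atBot (0:ℝ)] with T hT
  have hsplit : ∫ t in Iic (0:ℝ), f t = (∫ t in Iic T, f t) + ∫ t in Ioc T 0, f t := by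
    rw [← setIntegral_union (Iic_disjoint_Ioc le_rfl) measurableSet_Ioc
      (hf.mono_set (Iic_subset_Iic.2 hT)) (hf.mono_set Ioc_subset_Iic_self),
      Iic_union_Ioc_eq_Iic hT]
  rw [intervalIntegral.integral_of_le hT, hsplit]
  ring

theorem main_test
    (n : ℕ) (hn : 1 ≤ n) (m : ℝ) (hm : 0 < m)
    (ω : Fin n → ℝ) (hω : ∀ i, 0 < ω i)
    (A : En n → ℝ) (hA : ContDiff ℝ (⊤ : ℕ∞) A)
    (lam : Fin n → ℝ) (hlam : ∀ i, (lam i)^2 < (ω i)^2)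
    (hAcoer : ∀ x : En n, -(1/2) * m * ∑ i, (lam i)^2 * (x i)^2 ≤ A x)
    (V : En n → ℝ)
    (hV : ∀ x : En n, V x = (1/2) * m * (∑ i, (ω i)^2 * (x i)^2) + A x)
    (hVpos : ∀ x, 0 ≤ V x)
    (γ : ℝ → En n)
    (hcont : ContinuousOn γ (Iic (0:ℝ)))
    (hint : ∀ a b : ℝ, a ≤ b → b ≤ 0 → IntegrableOn (deriv γ) (Icc a b))
    (hftc : ∀ a b : ℝ, a ≤ b → b ≤ 0 → γ b - γ a = ∫ t in a..b, deriv γ t)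
    (hF : IntegrableOn (fun t => (1/2) * m * ‖deriv γ t‖^2 + V (γ t)) (Iic (0:ℝ)))
    : Tendsto γ atBot (nhds (0 : En n)) := by
  have hmne : m ≠ 0 := ne_of_gt hm
  -- norm-squared as coordinate sum
  have hnormsq : ∀ y : En n, ‖y‖^2 = ∑ i, (y i)^2 := fun y => by
    rw [EuclideanSpace.norm_eq, Real.sq_sqrt (by positivity)]
    simp [sq_abs]
  -- quadratic lower bound on V
  haveI : Nonempty (Fin n) := ⟨⟨0, hn⟩⟩
  set δ : ℝ := Finset.univ.inf' Finset.univ_nonempty (fun i => (ω i)^2 - (lam i)^2) with hδdef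
  have hδpos : 0 < δ := by
    rw [hδdef, Finset.lt_inf'_iff]
    exact fun i _ => sub_pos.2 (hlam i)
  have hδle : ∀ i : Fin n, δ ≤ (ω i)^2 - (lam i)^2 := fun i =>
    Finset.inf'_le _ (Finset.mem_univ i)
  set c : ℝ := (1/2) * m * δ with hcdef
  have hcpos : 0 < c := by positivity
  have hVlb : ∀ y : En n, c * ‖y‖^2 ≤ V y := by
    intro y
    have h1 := hAcoer y
    have h2 : ∑ i, δ * (y i)^2 ≤ ∑ i, ((ω i)^2 - (lam i)^2) * (y i)^2 :=
      Finset.sum_le_sum fun i _ => mul_le_mul_of_nonneg_right (hδle i) (sq_nonneg _)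
    have h3 : ∑ i, ((ω i)^2 - (lam i)^2) * (y i)^2
        = (∑ i, (ω i)^2 * (y i)^2) - ∑ i, (lam i)^2 * (y i)^2 := by
      rw [← Finset.sum_sub_distrib]; congr 1; ext i; ring
    have h4 : ∑ i, δ * (y i)^2 = δ * ‖y‖^2 := by
      rw [hnormsq, Finset.mul_sum]
    rw [hV y]
    nlinarith [hnormsq y]
  -- continuity of V
  have hVcont : Continuous V := by
    have : V = fun x => (1/2) * m * (∑ i, (ω i)^2 * (x i)^2) + A x := funext hV
    rw [this]
    have hcoord : ∀ i : Fin n, Continuous fun x : En n => x i := fun i =>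
      (continuous_apply i).comp (PiLp.continuous_ofLp (p := 2) (β := fun _ : Fin n => ℝ))
    exact (continuous_const.mul (continuous_finset_sum _ fun i _ =>
      continuous_const.mul ((hcoord i).pow 2))).add hA.continuous
  set F : ℝ → ℝ := fun t => (1/2) * m * ‖deriv γ t‖^2 + V (γ t) with hFdef
  have hVγ : IntegrableOn (fun t => V (γ t)) (Iic (0:ℝ)) := by
    refine Integrable.mono' hF ((hVcont.comp_continuousOn hcont).aestronglyMeasurable
      measurableSet_Iic) ?_
    refine Eventually.of_forall fun t => ?_
    rw [Real.norm_of_nonneg (hVpos _)]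
    have : 0 ≤ (1/2) * m * ‖deriv γ t‖^2 := by positivity
    simp only [hFdef]; linarith
  have hK : IntegrableOn (fun t => ‖deriv γ t‖^2) (Iic (0:ℝ)) := by
    have heq : (fun t => ‖deriv γ t‖^2) = fun t => (2/m) * (F t - V (γ t)) := by
      funext t; simp only [hFdef]; field_simp; ring
    rw [heq]
    exact (hF.sub hVγ).const_mul _
  have hG : IntegrableOn (fun t => ‖γ t‖^2) (Iic (0:ℝ)) := by
    refine Integrable.mono' (hVγ.const_mul c⁻¹)
      (((hcont.norm.pow 2)).aestronglyMeasurable measurableSet_Iic) ?_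
    refine Eventually.of_forall fun t => ?_
    rw [Real.norm_of_nonneg (by positivity)]
    rw [inv_mul_eq_div, le_div_iff₀ hcpos, mul_comm]
    exact hVlb _
  -- tails
  have hGt := tail_tendsto' _ hG
  have hKt := tail_tendsto' _ hK
  -- main argument
  rw [Metric.tendsto_nhds]
  intro ε hε
  set r : ℝ := ε/2 with hrdef
  have hrpos : 0 < r := by positivity
  set η : ℝ := min (ε^2*r/16) (ε/4) with hηdef
  have hηpos : 0 < η := lt_min (by positivity) (by positivity)
  have hev : ∀ᶠ T in atBot, ((∫ t in Iic T, ‖γ t‖^2) < η ∧ (∫ t in Iic T, ‖deriv γ t‖^2) < η)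
      ∧ T ≤ (0:ℝ) := by
    filter_upwards [hGt.eventually (eventually_lt_nhds hηpos),
      hKt.eventually (eventually_lt_nhds hηpos), eventually_le_atBot (0:ℝ)] with T h1 h2 h3
    exact ⟨⟨h1, h2⟩, h3⟩
  obtain ⟨T, hT⟩ := hev.exists
  obtain ⟨⟨hTG, hTK⟩, hT0⟩ := hT
  filter_upwards [eventually_le_atBot T] with t ht
  have ht0 : t ≤ 0 := ht.trans hT0
  -- find a good point s in [t-r, t]
  have hIccsub : Icc (t-r) t ⊆ Iic T := fun s hs => hs.2.trans ht
  have hex : ∃ s ∈ Icc (t-r) t, ‖γ s‖^2 ≤ η/r := by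
    by_contra hcon
    push_neg at hcon
    have hlb : η/r * (volume (Icc (t-r) t)).toReal ≤ ∫ s in Icc (t-r) t, ‖γ s‖^2 :=
      setIntegral_ge_of_const_le_real measurableSet_Icc (by simp)
        (fun s hs => (hcon s hs).le) (hG.mono_set (hIccsub.trans (Iic_subset_Iic.2 hT0)))
    rw [Real.volume_Icc] at hlb
    have hvol : (ENNReal.ofReal (t - (t-r))).toReal = r := by
      rw [ENNReal.toReal_ofReal (by linarith)]; ring
    rw [hvol] at hlb
    have hle : ∫ s in Icc (t-r) t, ‖γ s‖^2 ≤ ∫ s in Iic T, ‖γ s‖^2 :=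
      setIntegral_mono_set (hG.mono_set (Iic_subset_Iic.2 hT0))
        (Eventually.of_forall fun s => by positivity)
        (HasSubset.Subset.eventuallyLE hIccsub)
    have : η/r * r = η := div_mul_cancel₀ _ (ne_of_gt hrpos)
    linarith
  obtain ⟨s, hsmem, hs⟩ := hex
  have hst : s ≤ t := hsmem.2
  have hs0 : s ≤ 0 := hst.trans ht0
  -- bound the dislocation
  have hdiff : γ t - γ s = ∫ u in s..t, deriv γ u := hftc s t hst ht0
  have hIKst : IntervalIntegrable (deriv γ) volume s t := by
    rw [intervalIntegrable_iff_integrableOn_Icc_of_le hst]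
    exact hint s t hst ht0
  have hIKst2 : IntervalIntegrable (fun u => ‖deriv γ u‖^2) volume s t := by
    rw [intervalIntegrable_iff_integrableOn_Icc_of_le hst]
    exact hK.mono_set ((Icc_subset_Iic_self).trans (Iic_subset_Iic.2 ht0))
  have hb1 : ‖γ t - γ s‖ ≤ ∫ u in s..t, ‖deriv γ u‖ := by
    rw [hdiff]
    exact intervalIntegral.norm_integral_le_integral_norm hst
  have hb2 : ∫ u in s..t, ‖deriv γ u‖ ≤ ∫ u in s..t, (1 + ‖deriv γ u‖^2)/2 := by
    refine intervalIntegral.integral_mono_on hst hIKst.norm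
      (((intervalIntegrable_const).add hIKst2).div_const 2) fun u hu => ?_
    nlinarith [norm_nonneg (deriv γ u), sq_nonneg (‖deriv γ u‖ - 1)]
  have hb3 : ∫ u in s..t, (1 + ‖deriv γ u‖^2)/2
      = ((t - s) + ∫ u in s..t, ‖deriv γ u‖^2)/2 := by
    rw [intervalIntegral.integral_div, intervalIntegral.integral_add
      intervalIntegrable_const hIKst2, intervalIntegral.integral_const]
    simp
  have hb4 : ∫ u in s..t, ‖deriv γ u‖^2 ≤ ∫ u in Iic T, ‖deriv γ u‖^2 := by
    rw [intervalIntegral.integral_of_le hst]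
    refine setIntegral_mono_set (hK.mono_set (Iic_subset_Iic.2 hT0))
      (Eventually.of_forall fun u => by positivity)
      (HasSubset.Subset.eventuallyLE fun u hu => hu.2.trans ht)
  have hts : t - s ≤ r := by
    have := hsmem.1; linarith
  have hnorms : ‖γ s‖ ≤ Real.sqrt (η/r) := by
    rw [← Real.sqrt_sq (norm_nonneg (γ s))]
    exact Real.sqrt_le_sqrt hs
  have hsqrt : Real.sqrt (η/r) ≤ ε/4 := by
    have h1 : η/r ≤ (ε/4)^2 := by
      have : η ≤ ε^2*r/16 := min_le_left _ _
      rw [div_le_iff₀ hrpos]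
      nlinarith
    calc Real.sqrt (η/r) ≤ Real.sqrt ((ε/4)^2) := Real.sqrt_le_sqrt h1
      _ = ε/4 := Real.sqrt_sq (by positivity)
  have hη2 : η ≤ ε/4 := min_le_right _ _
  have hfinal : ‖γ t‖ ≤ ‖γ s‖ + ‖γ t - γ s‖ := by
    calc ‖γ t‖ = ‖γ s + (γ t - γ s)‖ := by congr 1; abel
      _ ≤ ‖γ s‖ + ‖γ t - γ s‖ := norm_add_le _ _
  rw [dist_zero_right]
  have : ‖γ t - γ s‖ ≤ (r + η)/2 := by linarith
  calc ‖γ t‖ ≤ ‖γ s‖ + ‖γ t - γ s‖ := hfinal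
    _ ≤ ε/4 + (r + η)/2 := by linarith
    _ < ε := by rw [hrdef] at *; linarith

/-- the minimizing curve tends to the origin as `t → -∞`. -/
theorem stmt_1
    (n : ℕ) (hn : 1 ≤ n) (m : ℝ) (hm : 0 < m)
    (ω : Fin n → ℝ) (hω : ∀ i, 0 < ω i)
    (A : En n → ℝ) (hA : ContDiff ℝ (⊤ : ℕ∞) A) (hA0 : A 0 = 0)
    (hA1 : fderiv ℝ A 0 = 0) (hA2 : fderiv ℝ (fderiv ℝ A) 0 = 0)
    (lam : Fin n → ℝ) (hlam : ∀ i, (lam i)^2 < (ω i)^2)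
    (hAcoer : ∀ x : En n, -(1/2) * m * ∑ i, (lam i)^2 * (x i)^2 ≤ A x)
    (V : En n → ℝ)
    (hV : ∀ x : En n, V x = (1/2) * m * (∑ i, (ω i)^2 * (x i)^2) + A x)
    (hVpos : ∀ x, 0 ≤ V x) (hVzero : ∀ x : En n, V x = 0 ↔ x = 0)
    (hVconv : ConvexOn ℝ univ V)
    (γmin : En n → ℝ → En n)
    (hadm : ∀ x, Adm n m V x (γmin x))
    (hmin : ∀ x γ, Adm n m V x γ → Iip n m V (γmin x) ≤ Iip n m V γ)
    (huniq : ∀ x γ, Adm n m V x γ →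
      (∀ γ', Adm n m V x γ' → Iip n m V γ ≤ Iip n m V γ') →
      EqOn γ (γmin x) (Iic (0:ℝ)))
    :
    ∀ x : En n, Tendsto (γmin x) atBot (nhds (0 : En n)) := by
  intro x
  obtain ⟨⟨hcont, hint, hftc⟩, hγ0, hF⟩ := hadm x
  exact main_test n hn m hm ω hω A hA lam hlam hAcoer V hV hVpos (γmin x)
    hcont hint hftc hF
end
end

section
/- The fundamental solution obeys the global lower bound S_(0)(x) ≥ (1/2) m Σ_{i=1}^n ν_i (x^i)² for all x ∈ ℝⁿ, where ν_i := √(ω_i² - λ_i²) > 0. -/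
open MeasureTheory Set Filter

noncomputable section

section AuxStmt9
open Real


lemma expInt (ν : ℝ) (t s : ℝ) (hts : t ≤ s) :
    ∫ u in Icc t s, ν * Real.exp (ν * u) = Real.exp (ν * s) - Real.exp (ν * t) := by
  rw [integral_Icc_eq_integral_Ioc, ← intervalIntegral.integral_of_le hts]
  have hderiv : ∀ u ∈ uIcc t s, HasDerivAt (fun u => Real.exp (ν * u)) (ν * Real.exp (ν * u)) u := by
    intro u _
    have h1 : HasDerivAt (fun u : ℝ => ν * u) ν u := by
      simpa using (hasDerivAt_id u).const_mul ν
    simpa [mul_comm] using h1.exp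
  exact intervalIntegral.integral_eq_sub_of_hasDerivAt hderiv
    ((continuous_const.mul ((continuous_const.mul continuous_id).rexp)).intervalIntegrable t s)

lemma fubini_tri (a : ℝ) (f h : ℝ → ℝ)
    (hf : IntegrableOn f (Icc a 0)) (hh : Continuous h) :
    ∫ t in Icc a 0, f t * (∫ s in Icc t 0, h s) =
      ∫ s in Icc a 0, (∫ t in Icc a s, f t) * h s := by
  set μ : Measure ℝ := volume.restrict (Icc a 0) with hμ
  have hSmeas : MeasurableSet {p : ℝ × ℝ | p.1 ≤ p.2} :=
    measurableSet_le measurable_fst measurable_snd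
  set F : ℝ × ℝ → ℝ := ({p : ℝ × ℝ | p.1 ≤ p.2}).indicator (fun p => f p.1 * h p.2) with hF
  have hhint : IntegrableOn h (Icc a 0) := hh.continuousOn.integrableOn_compact isCompact_Icc
  have hFint : Integrable F (μ.prod μ) :=
    Integrable.indicator (Integrable.mul_prod hf hhint) hSmeas
  have hswap : ∫ t, (∫ s, F (t, s) ∂μ) ∂μ = ∫ s, (∫ t, F (t, s) ∂μ) ∂μ :=
    integral_integral_swap hFint
  have hL : ∫ t, (∫ s, F (t, s) ∂μ) ∂μ = ∫ t in Icc a 0, f t * (∫ s in Icc t 0, h s) := by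
    rw [hμ]
    refine setIntegral_congr_fun measurableSet_Icc (fun t ht => ?_)
    have he : (fun s => F (t, s)) = (Ici t).indicator (fun s => f t * h s) := by
      ext s; simp only [hF, Set.indicator, mem_setOf_eq, mem_Ici]
    rw [he, setIntegral_indicator measurableSet_Ici]
    have hi : Icc a 0 ∩ Ici t = Icc t 0 := by
      ext s; simp only [mem_inter_iff, mem_Icc, mem_Ici]
      exact ⟨fun ⟨⟨_, h2⟩, h3⟩ => ⟨h3, h2⟩, fun ⟨h1, h2⟩ => ⟨⟨ht.1.trans h1, h2⟩, h1⟩⟩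
    rw [hi, integral_const_mul]
  have hR : ∫ s, (∫ t, F (t, s) ∂μ) ∂μ = ∫ s in Icc a 0, (∫ t in Icc a s, f t) * h s := by
    rw [hμ]
    refine setIntegral_congr_fun measurableSet_Icc (fun s hs => ?_)
    have he : (fun t => F (t, s)) = (Iic s).indicator (fun t => f t * h s) := by
      ext t; simp only [hF, Set.indicator, mem_setOf_eq, mem_Iic]
    rw [he, setIntegral_indicator measurableSet_Iic]
    have hi : Icc a 0 ∩ Iic s = Icc a s := by
      ext t; simp only [mem_inter_iff, mem_Icc, mem_Iic]
      exact ⟨fun ⟨⟨h1, _⟩, h3⟩ => ⟨h1, h3⟩, fun ⟨h1, h2⟩ => ⟨⟨h1, h2.trans hs.2⟩, h2⟩⟩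
    rw [hi, integral_mul_const]
  rw [← hL, hswap, hR]

lemma parts_identity (ν : ℝ) (g f : ℝ → ℝ) (a : ℝ) (ha : a ≤ 0) (hν : 0 < ν)
    (hg : ContinuousOn g (Iic 0))
    (hfint : IntegrableOn f (Icc a 0))
    (hftc : ∀ s, a ≤ s → s ≤ 0 → g s - g a = ∫ t in Icc a s, f t) :
    g 0 - Real.exp (ν * a) * g a =
      ∫ t in Icc a 0, Real.exp (ν * t) * (f t + ν * g t) := by
  have hgc : ContinuousOn g (Icc a 0) := hg.mono (Icc_subset_Iic_self)
  have hgint : IntegrableOn g (Icc a 0) := hgc.integrableOn_compact isCompact_Icc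
  have hexpg : IntegrableOn (fun t => Real.exp (ν * t) * g t) (Icc a 0) :=
    (((continuous_const.mul continuous_id).rexp.continuousOn).mul hgc).integrableOn_compact
      isCompact_Icc
  have hexpf : IntegrableOn (fun t => Real.exp (ν * t) * f t) (Icc a 0) := by
    refine Integrable.bdd_mul (c := 1) hfint
      ((continuous_const.mul continuous_id).rexp.aestronglyMeasurable.restrict) ?_
    refine (ae_restrict_iff' measurableSet_Icc).2 (ae_of_all _ (fun t ht => ?_))
    rw [Real.norm_eq_abs, abs_of_pos (Real.exp_pos _)]
    exact Real.exp_le_one_iff.2 (mul_nonpos_of_nonneg_of_nonpos hν.le ht.2)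
  -- f t * (1 - e^{νt}) integrable
  have hf1e : IntegrableOn (fun t => f t * (1 - Real.exp (ν * t))) (Icc a 0) := by
    have : (fun t => f t * (1 - Real.exp (ν * t)))
        = (fun t => f t - f t * Real.exp (ν * t)) := by ext t; ring
    rw [this]
    exact hfint.sub (by simpa [mul_comm] using hexpf)
  -- step 1: ∫ e^{νt} f = ∫ f - ∫ f (1 - e^{νt})
  have step1 : ∫ t in Icc a 0, Real.exp (ν * t) * f t
      = (∫ t in Icc a 0, f t) - ∫ t in Icc a 0, f t * (1 - Real.exp (ν * t)) := by
    rw [← integral_sub hfint hf1e]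
    refine setIntegral_congr_fun measurableSet_Icc (fun t _ => ?_)
    ring
  -- step 2: ∫ f (1 - e^{νt}) = ∫ f * (∫_{Icc t 0} ν e^{νs})
  have step2 : ∫ t in Icc a 0, f t * (1 - Real.exp (ν * t))
      = ∫ t in Icc a 0, f t * (∫ s in Icc t 0, ν * Real.exp (ν * s)) := by
    refine setIntegral_congr_fun measurableSet_Icc (fun t ht => ?_)
    rw [expInt ν t 0 ht.2]
    simp
  -- step 3: fubini
  have step3 : ∫ t in Icc a 0, f t * (∫ s in Icc t 0, ν * Real.exp (ν * s))
      = ∫ s in Icc a 0, (∫ t in Icc a s, f t) * (ν * Real.exp (ν * s)) :=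
    fubini_tri a f _ hfint (continuous_const.mul ((continuous_const.mul continuous_id).rexp))
  -- step 4: replace inner integral by g s - g a
  have step4 : ∫ s in Icc a 0, (∫ t in Icc a s, f t) * (ν * Real.exp (ν * s))
      = ∫ s in Icc a 0, (g s - g a) * (ν * Real.exp (ν * s)) := by
    refine setIntegral_congr_fun measurableSet_Icc (fun s hs => ?_)
    rw [← hftc s hs.1 hs.2]
  -- step 5: expand
  have hνe : IntegrableOn (fun s => ν * Real.exp (ν * s)) (Icc a 0) :=
    ((continuous_const.mul ((continuous_const.mul continuous_id).rexp)).continuousOn).integrableOn_compact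
      isCompact_Icc
  have step5 : ∫ s in Icc a 0, (g s - g a) * (ν * Real.exp (ν * s))
      = ν * (∫ s in Icc a 0, Real.exp (ν * s) * g s) - g a * (1 - Real.exp (ν * a)) := by
    have he : (fun s => (g s - g a) * (ν * Real.exp (ν * s)))
        = (fun s => ν * (Real.exp (ν * s) * g s) - g a * (ν * Real.exp (ν * s))) := by
      ext s; ring
    rw [he, integral_sub ((hexpg.const_mul ν)) (hνe.const_mul (g a)),
      integral_const_mul, integral_const_mul, expInt ν a 0 ha]
    simp
  -- combine
  have hsum : ∫ t in Icc a 0, Real.exp (ν * t) * (f t + ν * g t)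
      = (∫ t in Icc a 0, Real.exp (ν * t) * f t)
        + ν * ∫ t in Icc a 0, Real.exp (ν * t) * g t := by
    have he : (fun t => Real.exp (ν * t) * (f t + ν * g t))
        = (fun t => Real.exp (ν * t) * f t + ν * (Real.exp (ν * t) * g t)) := by
      ext t; ring
    rw [he, integral_add hexpf (hexpg.const_mul ν), integral_const_mul]
  have hfa : ∫ t in Icc a 0, f t = g 0 - g a := (hftc 0 ha le_rfl).symm
  rw [hsum, step1, step2, step3, step4, step5, hfa]
  ring


lemma small_tail (ν : ℝ) (hν : 0 < ν) (g : ℝ → ℝ)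
    (hg : ContinuousOn g (Iic 0))
    (hg2 : IntegrableOn (fun t => g t ^ 2) (Iic 0)) (ε : ℝ) (hε : 0 < ε) :
    ∃ a ≤ (0:ℝ), Real.exp (ν * a) * |g a| ≤ ε := by
  set C := ∫ t in Iic (0:ℝ), g t ^ 2 with hC
  have hC0 : 0 ≤ C := setIntegral_nonneg measurableSet_Iic (fun t _ => sq_nonneg _)
  -- choose b so that exp (ν b) * (sqrt C + 1) ≤ ε, b ≤ 0
  have hpos : 0 < ε / (Real.sqrt C + 1) := by positivity
  set b := min 0 (Real.log (ε / (Real.sqrt C + 1)) / ν) with hb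
  have hb0 : b ≤ 0 := min_le_left _ _
  have hbe : Real.exp (ν * b) ≤ ε / (Real.sqrt C + 1) := by
    have h1 : ν * b ≤ Real.log (ε / (Real.sqrt C + 1)) := by
      have := min_le_right 0 (Real.log (ε / (Real.sqrt C + 1)) / ν)
      calc ν * b ≤ ν * (Real.log (ε / (Real.sqrt C + 1)) / ν) := by
            exact mul_le_mul_of_nonneg_left this hν.le
        _ = Real.log (ε / (Real.sqrt C + 1)) := by field_simp
    calc Real.exp (ν * b) ≤ Real.exp (Real.log (ε / (Real.sqrt C + 1))) :=
          Real.exp_le_exp.2 h1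
      _ = ε / (Real.sqrt C + 1) := Real.exp_log hpos
  -- find a ∈ [b-1, b] with g a ^ 2 ≤ C
  have hsub : Icc (b - 1) b ⊆ Iic (0:ℝ) := fun t ht => ht.2.trans hb0
  have hcg : ContinuousOn (fun t => g t ^ 2) (Icc (b - 1) b) :=
    ((hg.mono hsub).pow 2)
  obtain ⟨a, haI, hamin⟩ := isCompact_Icc.exists_isMinOn (nonempty_Icc.2 (by linarith))
    hcg
  have haC : g a ^ 2 ≤ C := by
    have h1 : g a ^ 2 * (volume (Icc (b-1) b)).toReal ≤ ∫ t in Icc (b-1) b, g t ^ 2 :=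
      setIntegral_ge_of_const_le_real measurableSet_Icc (by simp)
        (fun t ht => hamin ht) (hg2.mono_set hsub)
    have h2 : (volume (Icc (b-1) b)).toReal = 1 := by
      rw [Real.volume_Icc]; norm_num
    have h3 : ∫ t in Icc (b-1) b, g t ^ 2 ≤ C := by
      refine setIntegral_mono_set hg2 ?_ (HasSubset.Subset.eventuallyLE hsub)
      exact ae_of_all _ (fun t => sq_nonneg _)
    rw [h2, mul_one] at h1
    linarith
  refine ⟨a, hsub haI, ?_⟩
  have hga : |g a| ≤ Real.sqrt C := by
    rw [← Real.sqrt_sq_eq_abs]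
    exact Real.sqrt_le_sqrt haC
  have hea : Real.exp (ν * a) ≤ Real.exp (ν * b) :=
    Real.exp_le_exp.2 (mul_le_mul_of_nonneg_left haI.2 hν.le)
  calc Real.exp (ν * a) * |g a| ≤ (ε / (Real.sqrt C + 1)) * (Real.sqrt C + 1) := by
        refine mul_le_mul (hea.trans hbe) ?_ (abs_nonneg _) hpos.le
        exact hga.trans (by linarith)
    _ = ε := by field_simp

lemma bound_piece (ν a s K : ℝ) (hν : 0 < ν) (ha0 : a ≤ 0) (hs0 : 0 < s)
    (u : ℝ → ℝ)
    (heu : IntegrableOn (fun t => Real.exp (ν * t) * u t) (Icc a 0))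
    (hqa : IntegrableOn (fun t => u t ^ 2) (Icc a 0))
    (hI2 : ∫ t in Icc a (0:ℝ), u t ^ 2 ≤ 2 * K) :
    |∫ t in Icc a (0:ℝ), Real.exp (ν * t) * u t| ≤
      s * (1 / (2 * ν)) + (1 / (4 * s)) * (2 * K) := by
  have hea : IntegrableOn (fun t => Real.exp (2 * ν * t)) (Icc a 0) :=
    ((continuous_const.mul continuous_id).rexp.continuousOn).integrableOn_compact isCompact_Icc
  have hptw : ∀ t, |Real.exp (ν * t) * u t| ≤
      s * Real.exp (2 * ν * t) + (1 / (4 * s)) * u t ^ 2 := by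
    intro t
    rw [abs_mul, abs_of_pos (Real.exp_pos _)]
    have he2 : Real.exp (2 * ν * t) = Real.exp (ν * t) ^ 2 := by
      rw [show (2:ℝ) * ν * t = 2 * (ν * t) by ring, ← Real.exp_nat_mul]
      norm_num
    rw [he2]
    have h1 := sq_nonneg (2 * s * Real.exp (ν * t) - |u t|)
    have h2 : |u t| ^ 2 = u t ^ 2 := sq_abs _
    have h4 : (4 * s) * (Real.exp (ν * t) * |u t|) ≤
        (4 * s) * (s * Real.exp (ν * t) ^ 2 + (1 / (4 * s)) * u t ^ 2) := by
      have expand : (4 * s) * (s * Real.exp (ν * t) ^ 2 + (1 / (4 * s)) * u t ^ 2)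
          = 4 * (s * s) * Real.exp (ν * t) ^ 2 + u t ^ 2 := by
        field_simp
      rw [expand]
      nlinarith [h1, h2]
    exact le_of_mul_le_mul_left h4 (by positivity)
  have hI1 : ∫ t in Icc a (0:ℝ), Real.exp (2 * ν * t) ≤ 1 / (2 * ν) := by
    have h0 : (2 * ν) * ∫ t in Icc a (0:ℝ), Real.exp (2 * ν * t)
        = Real.exp (2 * ν * 0) - Real.exp (2 * ν * a) := by
      rw [← integral_const_mul]
      exact expInt (2 * ν) a 0 ha0
    have h1 : (2 * ν) * ∫ t in Icc a (0:ℝ), Real.exp (2 * ν * t) ≤ 1 := by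
      rw [h0, mul_zero, Real.exp_zero]
      have := Real.exp_pos (2 * ν * a)
      linarith
    rw [le_div_iff₀ (by positivity), mul_comm]
    exact h1
  have c1 : |∫ t in Icc a (0:ℝ), Real.exp (ν * t) * u t|
      ≤ ∫ t in Icc a (0:ℝ), |Real.exp (ν * t) * u t| := by
    have := norm_integral_le_integral_norm (μ := volume.restrict (Icc a (0:ℝ)))
      (fun t => Real.exp (ν * t) * u t)
    simpa only [Real.norm_eq_abs] using this
  have c2 : ∫ t in Icc a (0:ℝ), |Real.exp (ν * t) * u t|
      ≤ ∫ t in Icc a (0:ℝ), (s * Real.exp (2 * ν * t) + (1 / (4 * s)) * u t ^ 2) :=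
    integral_mono heu.abs ((hea.const_mul _).add (hqa.const_mul _)) hptw
  have c3 : ∫ t in Icc a (0:ℝ), (s * Real.exp (2 * ν * t) + (1 / (4 * s)) * u t ^ 2)
      = s * (∫ t in Icc a (0:ℝ), Real.exp (2 * ν * t))
        + (1 / (4 * s)) * ∫ t in Icc a (0:ℝ), u t ^ 2 := by
    rw [integral_add (hea.const_mul _) (hqa.const_mul _), integral_const_mul,
      integral_const_mul]
  have c4 : s * (∫ t in Icc a (0:ℝ), Real.exp (2 * ν * t))
        + (1 / (4 * s)) * ∫ t in Icc a (0:ℝ), u t ^ 2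
      ≤ s * (1 / (2 * ν)) + (1 / (4 * s)) * (2 * K) := by
    have q1 : (0:ℝ) ≤ s := hs0.le
    have q2 : (0:ℝ) ≤ 1 / (4 * s) := by positivity
    have q3 : (0:ℝ) ≤ ∫ t in Icc a (0:ℝ), u t ^ 2 :=
      setIntegral_nonneg measurableSet_Icc (fun t _ => sq_nonneg _)
    exact add_le_add (mul_le_mul_of_nonneg_left hI1 q1)
      (mul_le_mul_of_nonneg_left hI2 q2)
  linarith [c1, c2, c3.le, c3.ge, c4]

lemma key1 (ν : ℝ) (hν : 0 < ν) (f g : ℝ → ℝ)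
    (hg : ContinuousOn g (Iic 0))
    (hfm : AEStronglyMeasurable f (volume.restrict (Iic 0)))
    (hfloc : ∀ a : ℝ, a ≤ 0 → IntegrableOn f (Icc a 0))
    (hftc : ∀ a s, a ≤ s → s ≤ 0 → g s - g a = ∫ t in Icc a s, f t)
    (hf2 : IntegrableOn (fun t => f t ^ 2) (Iic 0))
    (hg2 : IntegrableOn (fun t => g t ^ 2) (Iic 0)) :
    ν * g 0 ^ 2 ≤ ∫ t in Iic (0:ℝ), (f t ^ 2 + ν ^ 2 * g t ^ 2) := by
  set K := ∫ t in Iic (0:ℝ), (f t ^ 2 + ν ^ 2 * g t ^ 2) with hK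
  have hKint : IntegrableOn (fun t => f t ^ 2 + ν ^ 2 * g t ^ 2) (Iic 0) :=
    hf2.add (hg2.const_mul _)
  have hK0 : 0 ≤ K := setIntegral_nonneg measurableSet_Iic
    (fun t _ => by positivity)
  have hgm : AEStronglyMeasurable g (volume.restrict (Iic (0:ℝ))) :=
    hg.aestronglyMeasurable measurableSet_Iic
  have hqm : AEStronglyMeasurable (fun t => (f t + ν * g t) ^ 2) (volume.restrict (Iic (0:ℝ))) := by
    have h1 : AEStronglyMeasurable (fun t => f t + ν * g t) (volume.restrict (Iic (0:ℝ))) :=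
      hfm.add (hgm.const_mul ν)
    exact h1.pow 2
  have hq : IntegrableOn (fun t => (f t + ν * g t) ^ 2) (Iic 0) := by
    refine Integrable.mono' ((hKint.const_mul 2)) hqm (ae_of_all _ (fun t => ?_))
    rw [Real.norm_eq_abs, abs_of_nonneg (sq_nonneg _)]
    nlinarith [sq_nonneg (f t - ν * g t)]
  have hq2K : ∫ t in Iic (0:ℝ), (f t + ν * g t) ^ 2 ≤ 2 * K := by
    have h := integral_mono hq (hKint.const_mul 2) (fun t => by
      show (f t + ν * g t) ^ 2 ≤ 2 * (f t ^ 2 + ν ^ 2 * g t ^ 2)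
      nlinarith [sq_nonneg (f t - ν * g t)])
    calc ∫ t in Iic (0:ℝ), (f t + ν * g t) ^ 2
        ≤ ∫ t in Iic (0:ℝ), 2 * (f t ^ 2 + ν ^ 2 * g t ^ 2) := h
      _ = 2 * K := by rw [integral_const_mul]
  -- core estimate for each ε > 0
  have hcore : ∀ ε > 0, |g 0| ≤ ε + Real.sqrt ((K + ε) / ν) := by
    intro ε hε
    obtain ⟨a, ha0, haε⟩ := small_tail ν hν g hg hg2 ε hε
    have hid := parts_identity ν g f a ha0 hν hg (hfloc a ha0)
      (fun s h1 h2 => hftc a s h1 h2)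
    obtain ⟨s, hs0, hs2, hsq⟩ : ∃ s : ℝ, 0 < s ∧ s ^ 2 = ν * (K + ε) ∧
        Real.sqrt ((K + ε) / ν) = s / ν := by
      refine ⟨Real.sqrt (ν * (K + ε)), Real.sqrt_pos.2 (by positivity),
        Real.sq_sqrt (by positivity), ?_⟩
      have h1 : (K + ε) / ν = (Real.sqrt (ν * (K + ε)) / ν) ^ 2 := by
        rw [div_pow, Real.sq_sqrt (by positivity : (0:ℝ) ≤ ν * (K + ε)), pow_two,
          mul_div_mul_left _ _ hν.ne']
      rw [h1, Real.sqrt_sq (by positivity)]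
    have hsub : Icc a (0:ℝ) ⊆ Iic 0 := fun t ht => ht.2
    have hqa : IntegrableOn (fun t => (f t + ν * g t) ^ 2) (Icc a 0) := hq.mono_set hsub
    have heu : IntegrableOn (fun t => Real.exp (ν * t) * (f t + ν * g t)) (Icc a 0) := by
      refine Integrable.bdd_mul (c := 1)
        ((hfloc a ha0).add (((hg.mono (Icc_subset_Iic_self)).integrableOn_compact
          isCompact_Icc).const_mul ν))
        ((continuous_const.mul continuous_id).rexp.aestronglyMeasurable.restrict) ?_
      refine (ae_restrict_iff' measurableSet_Icc).2 (ae_of_all _ (fun t ht => ?_))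
      rw [Real.norm_eq_abs, abs_of_pos (Real.exp_pos _)]
      exact Real.exp_le_one_iff.2 (mul_nonpos_of_nonneg_of_nonpos hν.le ht.2)
    have hI2 : ∫ t in Icc a (0:ℝ), (f t + ν * g t) ^ 2 ≤ 2 * K := by
      refine le_trans ?_ hq2K
      exact setIntegral_mono_set hq (ae_of_all _ (fun t => sq_nonneg _))
        (HasSubset.Subset.eventuallyLE hsub)
    have habs := bound_piece ν a s K hν ha0 hs0 (fun t => f t + ν * g t) heu hqa hI2
    -- simplify the bound
    have hbound : s * (1 / (2 * ν)) + (1 / (4 * s)) * (2 * K) ≤ Real.sqrt ((K + ε) / ν) := by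
      rw [hsq]
      have hpos : (0:ℝ) < 4 * ν * s := by positivity
      have hmul : (s * (1 / (2 * ν)) + (1 / (4 * s)) * (2 * K)) * (4 * ν * s)
          = 2 * (s * s) + 2 * ν * K := by
        field_simp; ring
      have hmul2 : (s / ν) * (4 * ν * s) = 4 * (s * s) := by
        field_simp
      have hfin : (s * (1 / (2 * ν)) + (1 / (4 * s)) * (2 * K)) * (4 * ν * s)
          ≤ (s / ν) * (4 * ν * s) := by
        rw [hmul, hmul2]
        nlinarith [hs2, hε, hν]
      exact le_of_mul_le_mul_right hfin hpos
    have hg0 : g 0 = Real.exp (ν * a) * g a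
        + ∫ t in Icc a (0:ℝ), Real.exp (ν * t) * (f t + ν * g t) := by
      linarith [hid]
    calc |g 0| ≤ |Real.exp (ν * a) * g a|
          + |∫ t in Icc a (0:ℝ), Real.exp (ν * t) * (f t + ν * g t)| := by
          rw [hg0]; exact abs_add_le _ _
      _ ≤ ε + Real.sqrt ((K + ε) / ν) := by
          refine add_le_add ?_ (habs.trans hbound)
          rw [abs_mul, abs_of_pos (Real.exp_pos _)]
          exact haε
  -- limit ε → 0
  have hlim : |g 0| ≤ Real.sqrt (K / ν) := by
    have hcont : Continuous (fun ε : ℝ => ε + Real.sqrt ((K + ε) / ν)) :=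
      continuous_id.add ((Real.continuous_sqrt).comp
        ((continuous_const.add continuous_id).div_const ν))
    have htend : Tendsto (fun ε : ℝ => ε + Real.sqrt ((K + ε) / ν)) (nhdsWithin 0 (Ioi 0))
        (nhds (Real.sqrt (K / ν))) := by
      have h := (hcont.tendsto (0:ℝ)).mono_left (nhdsWithin_le_nhds (s := Ioi (0:ℝ)))
      have h0 : (0:ℝ) + Real.sqrt ((K + 0) / ν) = Real.sqrt (K / ν) := by norm_num
      rwa [h0] at h
    refine ge_of_tendsto htend ?_
    filter_upwards [self_mem_nhdsWithin] with ε hε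
    exact hcore ε hε
  have h1 : g 0 ^ 2 ≤ K / ν := by
    have h2 : |g 0| ^ 2 ≤ Real.sqrt (K / ν) ^ 2 :=
      pow_le_pow_left₀ (abs_nonneg _) hlim 2
    rw [sq_abs, Real.sq_sqrt (by positivity)] at h2
    exact h2
  have h3 : ν * g 0 ^ 2 ≤ ν * (K / ν) := mul_le_mul_of_nonneg_left h1 hν.le
  rwa [mul_div_cancel₀ _ hν.ne'] at h3

end AuxStmt9

/-- global lower bound `S₍₀₎(x) ≥ (1/2) m Σ νᵢ (xⁱ)²` with `νᵢ = √(ωᵢ² - λᵢ²)`. -/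
theorem stmt_9
    (n : ℕ) (hn : 1 ≤ n) (m : ℝ) (hm : 0 < m)
    (ω : Fin n → ℝ) (hω : ∀ i, 0 < ω i)
    (A : En n → ℝ) (hA : ContDiff ℝ (⊤ : ℕ∞) A) (hA0 : A 0 = 0)
    (hA1 : fderiv ℝ A 0 = 0) (hA2 : fderiv ℝ (fderiv ℝ A) 0 = 0)
    (lam : Fin n → ℝ) (hlam : ∀ i, (lam i)^2 < (ω i)^2)
    (hAcoer : ∀ x : En n, -(1/2) * m * ∑ i, (lam i)^2 * (x i)^2 ≤ A x)
    (V : En n → ℝ)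
    (hV : ∀ x : En n, V x = (1/2) * m * (∑ i, (ω i)^2 * (x i)^2) + A x)
    (hVpos : ∀ x, 0 ≤ V x) (hVzero : ∀ x : En n, V x = 0 ↔ x = 0)
    (hVconv : ConvexOn ℝ univ V)
    (γmin : En n → ℝ → En n)
    (hadm : ∀ x, Adm n m V x (γmin x))
    (hmin : ∀ x γ, Adm n m V x γ → Iip n m V (γmin x) ≤ Iip n m V γ)
    (huniq : ∀ x γ, Adm n m V x γ →
      (∀ γ', Adm n m V x γ' → Iip n m V γ ≤ Iip n m V γ') →
      EqOn γ (γmin x) (Iic (0:ℝ)))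
    (S : En n → ℝ) (hS : ∀ x, S x = Iip n m V (γmin x))
    :
    ∀ x : En n,
      (1/2) * m * ∑ i, Real.sqrt ((ω i)^2 - (lam i)^2) * (x i)^2 ≤ S x := by
  intro x
  obtain ⟨⟨hcont, hloc, hftcγ⟩, hγ0, hint⟩ := hadm x
  set γ := γmin x with hγ
  set ν : Fin n → ℝ := fun i => Real.sqrt ((ω i)^2 - (lam i)^2) with hν
  have hνpos : ∀ i, 0 < ν i := fun i => Real.sqrt_pos.2 (sub_pos.2 (hlam i))
  have hν2 : ∀ i, (ν i)^2 = (ω i)^2 - (lam i)^2 :=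
    fun i => Real.sq_sqrt (sub_pos.2 (hlam i)).le
  -- norm squared on Euclidean space
  have hnorm : ∀ y : En n, ‖y‖^2 = ∑ i, (y i)^2 := by
    intro y
    rw [EuclideanSpace.norm_eq, Real.sq_sqrt (by positivity)]
    exact Finset.sum_congr rfl (fun i _ => by rw [Real.norm_eq_abs, sq_abs])
  -- lower bound on V
  have hVlb : ∀ y : En n, ∑ i, (1/2) * m * (ν i)^2 * (y i)^2 ≤ V y := by
    intro y
    have h1 : ∑ i, (1/2) * m * (ν i)^2 * (y i)^2
        = (1/2) * m * (∑ i, (ω i)^2 * (y i)^2)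
          - (1/2) * m * (∑ i, (lam i)^2 * (y i)^2) := by
      rw [Finset.mul_sum, Finset.mul_sum, ← Finset.sum_sub_distrib]
      exact Finset.sum_congr rfl (fun i _ => by rw [hν2 i]; ring)
    have h2 := hAcoer y
    rw [hV y]
    linarith
  -- the energy function
  set H : ℝ → ℝ := fun t => (1/2) * m * ‖deriv γ t‖^2 + V (γ t) with hH
  have hHnn : ∀ t, 0 ≤ H t := fun t => by
    have := hVpos (γ t); positivity
  -- coordinates
  set f : Fin n → ℝ → ℝ := fun i t => (deriv γ t) i with hf
  set g : Fin n → ℝ → ℝ := fun i t => (γ t) i with hgdef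
  have hproj : ∀ i (y : En n), (EuclideanSpace.proj (𝕜 := ℝ) i) y = y i := fun i y => rfl
  have hfm : ∀ i, Measurable (f i) := by
    intro i
    exact ((EuclideanSpace.proj (𝕜 := ℝ) i).continuous.measurable).comp (measurable_deriv γ)
  have hgcont : ∀ i, ContinuousOn (g i) (Iic (0:ℝ)) := by
    intro i
    exact (EuclideanSpace.proj (𝕜 := ℝ) i).continuous.comp_continuousOn hcont
  -- bounds for integrability
  have hfbd : ∀ i t, (f i t)^2 ≤ (2/m) * H t := by
    intro i t
    have h1 : (f i t)^2 ≤ ‖deriv γ t‖^2 := by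
      rw [hnorm]
      exact Finset.single_le_sum (f := fun j => ((deriv γ t) j)^2)
        (fun j _ => sq_nonneg _) (Finset.mem_univ i)
    have h2 := hVpos (γ t)
    rw [hH]
    have h3 : (2/m) * ((1/2) * m * ‖deriv γ t‖^2 + V (γ t))
        = ‖deriv γ t‖^2 + (2/m) * V (γ t) := by field_simp
    rw [h3]
    have h4 : 0 ≤ (2/m) * V (γ t) := by positivity
    linarith
  have hgbd : ∀ i t, (g i t)^2 ≤ (2/(m * (ν i)^2)) * H t := by
    intro i t
    have h1 : (1/2) * m * (ν i)^2 * (g i t)^2 ≤ V (γ t) := by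
      refine le_trans ?_ (hVlb (γ t))
      exact Finset.single_le_sum (f := fun j => (1/2) * m * (ν j)^2 * ((γ t) j)^2)
        (fun j _ => by positivity) (Finset.mem_univ i)
    have h2 : 0 ≤ (1/2) * m * ‖deriv γ t‖^2 := by positivity
    have h3 : V (γ t) ≤ H t := by rw [hH]; linarith
    have h4 : (1/2) * m * (ν i)^2 * (g i t)^2 ≤ H t := h1.trans h3
    have h5 : 0 < (1/2) * m * (ν i)^2 := by have := hνpos i; positivity
    calc (g i t)^2 = ((1/2) * m * (ν i)^2 * (g i t)^2) / ((1/2) * m * (ν i)^2) := by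
          rw [eq_div_iff (ne_of_gt h5)]; ring
      _ ≤ H t / ((1/2) * m * (ν i)^2) := by gcongr
      _ = (2/(m * (ν i)^2)) * H t := by field_simp
  -- integrability of squares
  have hf2 : ∀ i, IntegrableOn (fun t => (f i t)^2) (Iic (0:ℝ)) := by
    intro i
    refine Integrable.mono' (hint.const_mul (2/m)) ?_ (ae_of_all _ (fun t => ?_))
    · exact (((hfm i).pow_const 2).aestronglyMeasurable).restrict
    · rw [Real.norm_eq_abs, abs_of_nonneg (sq_nonneg _)]
      exact hfbd i t
  have hg2 : ∀ i, IntegrableOn (fun t => (g i t)^2) (Iic (0:ℝ)) := by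
    intro i
    refine Integrable.mono' (hint.const_mul (2/(m * (ν i)^2))) ?_ (ae_of_all _ (fun t => ?_))
    · exact (((hgcont i).pow 2).aestronglyMeasurable measurableSet_Iic)
    · rw [Real.norm_eq_abs, abs_of_nonneg (sq_nonneg _)]
      exact hgbd i t
  -- local integrability of f i
  have hfloc : ∀ i, ∀ a : ℝ, a ≤ 0 → IntegrableOn (f i) (Icc a 0) := by
    intro i a ha
    exact (EuclideanSpace.proj (𝕜 := ℝ) i).integrable_comp (hloc a 0 ha le_rfl)
  -- FTC for coordinates
  have hftc : ∀ i, ∀ a s : ℝ, a ≤ s → s ≤ 0 → g i s - g i a = ∫ t in Icc a s, f i t := by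
    intro i a s has hs0
    have h1 := hftcγ a s has hs0
    have h2 : IntervalIntegrable (deriv γ) volume a s := by
      rw [intervalIntegrable_iff_integrableOn_Icc_of_le has]
      exact hloc a s has hs0
    have h3 := (EuclideanSpace.proj (𝕜 := ℝ) i).intervalIntegral_comp_comm h2
    have h4 : (γ s - γ a) i = g i s - g i a := rfl
    calc g i s - g i a = (γ s - γ a) i := rfl
      _ = (∫ t in a..s, deriv γ t) i := by rw [h1]
      _ = ∫ t in a..s, f i t := h3.symm
      _ = ∫ t in Icc a s, f i t := by
          rw [intervalIntegral.integral_of_le has, ← integral_Icc_eq_integral_Ioc]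
  -- apply key1 coordinatewise
  have hkey : ∀ i, ν i * (x i)^2 ≤ ∫ t in Iic (0:ℝ), ((f i t)^2 + (ν i)^2 * (g i t)^2) := by
    intro i
    have h0 : g i 0 = x i := by rw [hgdef]; simp [hγ0]
    have := key1 (ν i) (hνpos i) (f i) (g i) (hgcont i)
      ((hfm i).aestronglyMeasurable.restrict) (hfloc i) (hftc i) (hf2 i) (hg2 i)
    rwa [h0] at this
  -- sum up
  have hsumint : ∀ i, IntegrableOn (fun t => (1/2) * m * ((f i t)^2 + (ν i)^2 * (g i t)^2))
      (Iic (0:ℝ)) := fun i => (((hf2 i).add ((hg2 i).const_mul _)).const_mul _)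
  have hstep : ∑ i, (1/2) * m * (ν i * (x i)^2)
      ≤ ∫ t in Iic (0:ℝ), ∑ i, (1/2) * m * ((f i t)^2 + (ν i)^2 * (g i t)^2) := by
    rw [integral_finset_sum _ (fun i _ => hsumint i)]
    refine Finset.sum_le_sum (fun i _ => ?_)
    rw [integral_const_mul]
    exact mul_le_mul_of_nonneg_left (hkey i) (by positivity)
  have hptw : ∀ t, ∑ i, (1/2) * m * ((f i t)^2 + (ν i)^2 * (g i t)^2) ≤ H t := by
    intro t
    have h1 : ∑ i, (1/2) * m * ((f i t)^2 + (ν i)^2 * (g i t)^2)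
        = (1/2) * m * ‖deriv γ t‖^2 + ∑ i, (1/2) * m * (ν i)^2 * (g i t)^2 := by
      rw [hnorm, Finset.mul_sum, ← Finset.sum_add_distrib]
      exact Finset.sum_congr rfl (fun i _ => by ring)
    rw [h1, hH]
    have := hVlb (γ t)
    linarith
  have hfin : ∫ t in Iic (0:ℝ), ∑ i, (1/2) * m * ((f i t)^2 + (ν i)^2 * (g i t)^2)
      ≤ ∫ t in Iic (0:ℝ), H t :=
    integral_mono (integrable_finset_sum _ (fun i _ => hsumint i)) hint hptw
  have hSx : S x = ∫ t in Iic (0:ℝ), H t := by rw [hS x, Iip]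
  rw [hSx, Finset.mul_sum] at *
  calc ∑ i, (1/2) * m * (Real.sqrt ((ω i)^2 - (lam i)^2) * (x i)^2)
      = ∑ i, (1/2) * m * (ν i * (x i)^2) := rfl
    _ ≤ ∫ t in Iic (0:ℝ), ∑ i, (1/2) * m * ((f i t)^2 + (ν i)^2 * (g i t)^2) := hstep
    _ ≤ ∫ t in Iic (0:ℝ), H t := hfin
end
end

section
/- The semi-classical ground-state ansatz built from the fundamental solution is normalizable: for every ℏ > 0, the function x ↦ e^{-S_(0)(x)/ℏ} is square-integrable on ℝⁿ with respect to Lebesgue measure, i.e. ∫_{ℝⁿ} e^{-2 S_(0)(x)/ℏ} dx < ∞. -/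
open MeasureTheory Set Filter

noncomputable section

open Topology
set_option maxHeartbeats 2000000
/-- Derivative of a primitive at a.e. point (Lebesgue differentiation). -/
lemma aux_hasDerivAt_primitive {E : Type*} [NormedAddCommGroup E] [NormedSpace ℝ E]
    [CompleteSpace E] {g : ℝ → E} (hg : Integrable g) (a : ℝ) :
    ∀ᵐ x : ℝ, HasDerivAt (fun u => ∫ t in a..u, g t) (g x) x := by
  filter_upwards [IsUnifLocDoublingMeasure.ae_tendsto_average_norm_sub volume
    hg.locallyIntegrable 1] with x hx
  rw [hasDerivAt_iff_tendsto]
  have key : Tendsto (fun y : ℝ => ⨍ t in Metric.closedBall ((x + y)/2) (|y - x|/2),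
      ‖g t - g x‖) (𝓝[≠] x) (𝓝 0) := by
    apply hx (fun y => (x + y)/2) (fun y => |y - x|/2)
    · rw [tendsto_nhdsWithin_iff]
      constructor
      · have : Tendsto (fun y : ℝ => |y - x|/2) (𝓝 x) (𝓝 (|x - x|/2)) := by
          exact ((continuous_id.sub continuous_const).abs.div_const 2).tendsto x
        simpa using this.mono_left nhdsWithin_le_nhds
      · filter_upwards [self_mem_nhdsWithin] with y hy
        have : y - x ≠ 0 := sub_ne_zero.mpr hy
        have := abs_pos.mpr this
        exact mem_Ioi.mpr (by linarith)
    · filter_upwards with y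
      simp only [Metric.mem_closedBall, one_mul, Real.dist_eq]
      rw [abs_sub_comm y x]
      have : x - (x + y)/2 = (x - y)/2 := by ring
      rw [this, abs_div]
      simp [abs_of_nonneg, le_refl]
  rw [← nhdsNE_sup_pure x, tendsto_sup]
  constructor
  · apply squeeze_zero' (Eventually.of_forall fun y => by positivity) _ key
    filter_upwards [self_mem_nhdsWithin] with y hy
    have hyx : y - x ≠ 0 := sub_ne_zero.mpr hy
    set r := |y - x|/2 with hr
    have hrpos : 0 < r := by
      have := abs_pos.mpr hyx
      rw [hr]; linarith
    set B := Metric.closedBall ((x + y)/2) r with hB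
    have e1 : (∫ t in a..y, g t) - (∫ t in a..x, g t) = ∫ t in x..y, g t :=
      intervalIntegral.integral_interval_sub_left hg.intervalIntegrable hg.intervalIntegrable
    have e2 : (∫ t in x..y, g t) - (y - x) • g x = ∫ t in x..y, (g t - g x) := by
      rw [intervalIntegral.integral_sub hg.intervalIntegrable intervalIntegrable_const,
        intervalIntegral.integral_const]
    have e3 : ‖∫ t in x..y, (g t - g x)‖ ≤ ∫ t in Set.uIoc x y, ‖g t - g x‖ :=
      intervalIntegral.norm_integral_le_integral_norm_uIoc
    have hsub : Set.uIoc x y ⊆ B := by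
      intro t ht
      rw [Set.uIoc] at ht
      have h1 : min x y < t := ht.1
      have h2 : t ≤ max x y := ht.2
      have hmm : min x y + max x y = x + y := min_add_max x y
      have hd : max x y - min x y = |y - x| := max_sub_min_eq_abs x y
      rw [hB, Metric.mem_closedBall, Real.dist_eq]
      rw [abs_le]
      constructor <;> [skip; skip] <;> · rw [hr]; rw [← hd]; linarith
    have hBint : IntegrableOn (fun t => ‖g t - g x‖) B := by
      apply Integrable.norm
      exact hg.integrableOn.sub (integrableOn_const measure_closedBall_lt_top.ne)
    have e4 : ∫ t in Set.uIoc x y, ‖g t - g x‖ ≤ ∫ t in B, ‖g t - g x‖ :=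
      setIntegral_mono_set hBint (Eventually.of_forall fun t => norm_nonneg _)
        (HasSubset.Subset.eventuallyLE hsub)
    have hBvol : (volume B).toReal = 2 * r := by
      rw [hB, Real.volume_closedBall, ENNReal.toReal_ofReal (by positivity)]
    have e5 : ∫ t in B, ‖g t - g x‖ = (2*r) * ⨍ t in B, ‖g t - g x‖ := by
      rw [setAverage_eq, smul_eq_mul, measureReal_def, hBvol, ← mul_assoc,
        mul_inv_cancel₀ (by positivity), one_mul]
    have hnorm : ‖(∫ t in a..y, g t) - (∫ t in a..x, g t) - (y - x) • g x‖
        ≤ (2*r) * ⨍ t in B, ‖g t - g x‖ := by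
      rw [e1, e2, ← e5]
      exact e3.trans e4
    have h2r : ‖y - x‖ = 2 * r := by rw [Real.norm_eq_abs, hr]; ring
    calc ‖y - x‖⁻¹ * ‖(∫ t in a..y, g t) - (∫ t in a..x, g t) - (y - x) • g x‖
        ≤ ‖y - x‖⁻¹ * ((2*r) * ⨍ t in B, ‖g t - g x‖) := by
          apply mul_le_mul_of_nonneg_left hnorm (by positivity)
      _ = ⨍ t in B, ‖g t - g x‖ := by
          rw [h2r, ← mul_assoc, inv_mul_cancel₀ (by positivity), one_mul]
  · have := tendsto_pure_nhds (fun x' : ℝ =>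
      ‖x' - x‖⁻¹ * ‖(∫ t in a..x', g t) - (∫ t in a..x, g t) - (x' - x) • g x‖) x
    simpa using this

/-- A `LocAC` curve is differentiable at a.e. negative time. -/
lemma aux_ae_diff {n : ℕ} {γ : ℝ → En n} (h : LocAC n γ) :
    ∀ᵐ t : ℝ, t < 0 → DifferentiableAt ℝ γ t := by
  have H : ∀ k : ℕ, ∀ᵐ t : ℝ, t ∈ Ioo (-(k:ℝ) - 1) 0 → DifferentiableAt ℝ γ t := by
    intro k
    set a : ℝ := -(k:ℝ) - 1 with ha
    have ha0 : a ≤ 0 := by rw [ha]; have : (0:ℝ) ≤ k := Nat.cast_nonneg k; linarith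
    set g : ℝ → En n := (Icc a 0).indicator (deriv γ) with hg
    have hgint : Integrable g := by
      rw [hg, integrable_indicator_iff measurableSet_Icc]
      exact h.2.1 a 0 ha0 le_rfl
    filter_upwards [aux_hasDerivAt_primitive hgint a] with x hx hmem
    have heq : ∀ u ∈ Ioo a 0, γ u = γ a + ∫ t in a..u, g t := by
      intro u hu
      have h1 : ∫ t in a..u, g t = ∫ t in a..u, deriv γ t := by
        apply intervalIntegral.integral_congr
        intro s hs
        rw [uIcc_of_le hu.1.le] at hs
        rw [hg]
        exact Set.indicator_of_mem (Icc_subset_Icc le_rfl hu.2.le hs) _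
      rw [h1, ← h.2.2 a u hu.1.le hu.2.le]
      abel
    have hev : γ =ᶠ[nhds x] (fun u => γ a + ∫ t in a..u, g t) := by
      filter_upwards [isOpen_Ioo.mem_nhds hmem] with u hu
      exact heq u hu
    exact ((hx.const_add (γ a)).congr_of_eventuallyEq hev).differentiableAt
  rw [← ae_all_iff] at H
  filter_upwards [H] with t ht htneg
  obtain ⟨k, hk⟩ := exists_nat_gt (-t)
  exact ht k ⟨by linarith, htneg⟩

lemma aux_ae_neg {s : Set ℝ} (hs : s ⊆ Iic 0) (hsm : MeasurableSet s) :
    ∀ᵐ t ∂(volume.restrict s), t < 0 := by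
  have h2 : ∀ᵐ t : ℝ, t ≠ (0:ℝ) := by simp [ae_iff]
  filter_upwards [ae_restrict_mem hsm, ae_restrict_of_ae h2] with t ht hne
  exact lt_of_le_of_ne (hs ht) hne

lemma aux_S_convex {n : ℕ} (m : ℝ) (hm : 0 < m) (V : En n → ℝ)
    (hVcont : Continuous V) (hVpos : ∀ x, 0 ≤ V x) (hVconv : ConvexOn ℝ univ V)
    (γmin : En n → ℝ → En n) (hadm : ∀ x, Adm n m V x (γmin x))
    (hmin : ∀ x γ, Adm n m V x γ → Iip n m V (γmin x) ≤ Iip n m V γ)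
    (S : En n → ℝ) (hS : ∀ x, S x = Iip n m V (γmin x)) :
    ConvexOn ℝ univ S := by
  refine ⟨convex_univ, fun x _ y _ a b ha hb hab => ?_⟩
  obtain ⟨⟨hγc, hγi, hγftc⟩, hγ0, hγint⟩ := hadm x
  obtain ⟨⟨hηc, hηi, hηftc⟩, hη0, hηint⟩ := hadm y
  obtain ⟨γ, hγdef⟩ : ∃ g, g = γmin x := ⟨_, rfl⟩
  obtain ⟨η, hηdef⟩ : ∃ g, g = γmin y := ⟨_, rfl⟩
  rw [← hγdef] at hγc hγi hγftc hγ0 hγint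
  rw [← hηdef] at hηc hηi hηftc hη0 hηint
  obtain ⟨θ, hθ⟩ : ∃ θ, θ = fun s : ℝ => a • γ s + b • η s := ⟨_, rfl⟩
  obtain ⟨D, hD⟩ : ∃ D, D = fun s : ℝ => a • deriv γ s + b • deriv η s := ⟨_, rfl⟩
  have hne0 : ∀ᵐ t : ℝ, t ≠ (0:ℝ) := by simp [ae_iff]
  have hDae : ∀ᵐ t : ℝ, t < 0 → deriv θ t = D t := by
    filter_upwards [aux_ae_diff ⟨hγc, hγi, hγftc⟩, aux_ae_diff ⟨hηc, hηi, hηftc⟩]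
      with t h1 h2 ht
    rw [hθ, hD]
    exact (((h1 ht).hasDerivAt.const_smul a).add ((h2 ht).hasDerivAt.const_smul b)).deriv
  have hDres : ∀ (s : Set ℝ), s ⊆ Iic 0 → MeasurableSet s →
      (deriv θ) =ᵐ[volume.restrict s] D := by
    intro s hs hsm
    filter_upwards [ae_restrict_of_ae hDae, aux_ae_neg hs hsm] with t h1 h2 using h1 h2
  have hDint : ∀ c d : ℝ, c ≤ d → d ≤ 0 → IntegrableOn D (Icc c d) := by
    intro c d hcd hd0
    rw [hD]
    exact ((hγi c d hcd hd0).smul a).add ((hηi c d hcd hd0).smul b)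
  have hθc : ContinuousOn θ (Iic (0:ℝ)) := by
    rw [hθ]; exact (hγc.const_smul a).add (hηc.const_smul b)
  have hLocAC : LocAC n θ := by
    refine ⟨hθc, ?_, ?_⟩
    · intro c d hcd hd0
      exact (hDint c d hcd hd0).congr
        ((hDres (Icc c d) (fun t ht => le_trans ht.2 hd0) measurableSet_Icc).symm)
    · intro c d hcd hd0
      have hγII : IntervalIntegrable (deriv γ) volume c d := by
        rw [intervalIntegrable_iff, uIoc_of_le hcd]
        exact (hγi c d hcd hd0).mono_set Ioc_subset_Icc_self
      have hηII : IntervalIntegrable (deriv η) volume c d := by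
        rw [intervalIntegrable_iff, uIoc_of_le hcd]
        exact (hηi c d hcd hd0).mono_set Ioc_subset_Icc_self
      calc θ d - θ c = a • (γ d - γ c) + b • (η d - η c) := by
            simp only [hθ, smul_sub]; abel
        _ = (a • ∫ t in c..d, deriv γ t) + b • ∫ t in c..d, deriv η t := by
            rw [hγftc c d hcd hd0, hηftc c d hcd hd0]
        _ = ∫ t in c..d, D t := by
            rw [hD, ← intervalIntegral.integral_smul, ← intervalIntegral.integral_smul]
            exact (intervalIntegral.integral_add (hγII.smul a) (hηII.smul b)).symm
        _ = ∫ t in c..d, deriv θ t := by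
            apply intervalIntegral.integral_congr_ae
            filter_upwards [hDae, hne0] with t h1 h2 ht
            rw [uIoc_of_le hcd] at ht
            exact (h1 (lt_of_le_of_ne (ht.2.trans hd0) h2)).symm
  have hDm : Measurable D := by
    rw [hD]
    exact (((stronglyMeasurable_deriv γ).measurable).const_smul a).add
      (((stronglyMeasurable_deriv η).measurable).const_smul b)
  have hbound : ∀ᵐ s ∂(volume.restrict (Iic (0:ℝ))),
      (1/2)*m*‖deriv θ s‖^2 + V (θ s) ≤
        a * ((1/2)*m*‖deriv γ s‖^2 + V (γ s)) + b * ((1/2)*m*‖deriv η s‖^2 + V (η s)) := by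
    filter_upwards [hDres (Iic 0) (fun t ht => ht) measurableSet_Iic] with s hs
    rw [hs, hD]
    have hsq : ‖a • deriv γ s + b • deriv η s‖^2
        ≤ a * ‖deriv γ s‖^2 + b * ‖deriv η s‖^2 := by
      have hn : ‖a • deriv γ s + b • deriv η s‖ ≤ a * ‖deriv γ s‖ + b * ‖deriv η s‖ := by
        refine (norm_add_le _ _).trans ?_
        rw [norm_smul, norm_smul, Real.norm_eq_abs, Real.norm_eq_abs,
          abs_of_nonneg ha, abs_of_nonneg hb]
      nlinarith [hn, hab, mul_le_mul hn hn (norm_nonneg _) (by positivity),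
        mul_nonneg (mul_nonneg ha hb) (sq_nonneg (‖deriv γ s‖ - ‖deriv η s‖)),
        norm_nonneg (deriv γ s), norm_nonneg (deriv η s)]
    have hVθ : V (θ s) ≤ a * V (γ s) + b * V (η s) := by
      have h3 := hVconv.2 (mem_univ (γ s)) (mem_univ (η s)) ha hb hab
      rw [hθ]
      simpa [smul_eq_mul] using h3
    nlinarith [mul_le_mul_of_nonneg_left hsq (by positivity : (0:ℝ) ≤ (1/2)*m), hVθ]
  have hmeas : AEStronglyMeasurable (fun s => (1/2)*m*‖deriv θ s‖^2 + V (θ s))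
      (volume.restrict (Iic (0:ℝ))) := by
    apply AEStronglyMeasurable.add
    · have hm2 : Measurable fun s => (1/2)*m*‖D s‖^2 :=
        measurable_const.mul ((hDm.norm).pow_const 2)
      apply hm2.aestronglyMeasurable.congr
      filter_upwards [hDres (Iic 0) (fun t ht => ht) measurableSet_Iic] with s hs
      rw [hs]
    · exact (hVcont.comp_continuousOn hθc).aestronglyMeasurable measurableSet_Iic
  have hθint : IntegrableOn (fun s => (1/2)*m*‖deriv θ s‖^2 + V (θ s)) (Iic (0:ℝ)) := by
    apply Integrable.mono' ((hγint.const_mul a).add (hηint.const_mul b)) hmeas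
    filter_upwards [hbound] with s hs
    rw [Real.norm_eq_abs, abs_of_nonneg (add_nonneg (by positivity) (hVpos _))]
    exact hs
  have hadmθ : Adm n m V (a • x + b • y) θ := by
    refine ⟨hLocAC, ?_, hθint⟩
    rw [hθ]
    simp only []
    rw [hγ0, hη0]
  have hle : Iip n m V θ ≤ a * Iip n m V γ + b * Iip n m V η := by
    have h1 : (∫ t in Iic (0:ℝ), ((1/2)*m*‖deriv θ t‖^2 + V (θ t)))
        ≤ ∫ t in Iic (0:ℝ), (a * ((1/2)*m*‖deriv γ t‖^2 + V (γ t))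
            + b * ((1/2)*m*‖deriv η t‖^2 + V (η t))) :=
      integral_mono_ae hθint ((hγint.const_mul a).add (hηint.const_mul b)) hbound
    have h2 : (∫ t in Iic (0:ℝ), (a * ((1/2)*m*‖deriv γ t‖^2 + V (γ t))
            + b * ((1/2)*m*‖deriv η t‖^2 + V (η t))))
        = a * (∫ t in Iic (0:ℝ), ((1/2)*m*‖deriv γ t‖^2 + V (γ t)))
            + b * (∫ t in Iic (0:ℝ), ((1/2)*m*‖deriv η t‖^2 + V (η t))) := by
      rw [integral_add (hγint.const_mul a) (hηint.const_mul b),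
        integral_const_mul, integral_const_mul]
    unfold Iip
    rw [h2] at h1
    exact h1
  rw [smul_eq_mul, smul_eq_mul, hS, hS, hS, ← hγdef, ← hηdef]
  exact (hmin _ θ hadmθ).trans hle

lemma aux_Iip_nonneg {n : ℕ} (m : ℝ) (hm : 0 < m) (V : En n → ℝ)
    (hVpos : ∀ x, 0 ≤ V x) (γ : ℝ → En n) : 0 ≤ Iip n m V γ :=
  setIntegral_nonneg measurableSet_Iic (fun t _ => add_nonneg (by positivity) (hVpos _))

lemma aux_S_lb {n : ℕ} (m : ℝ) (hm : 0 < m) (ε : ℝ) (hε : 0 < ε) (V : En n → ℝ)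
    (hVpos : ∀ x, 0 ≤ V x)
    (hVlb : ∀ y : En n, (1/2) * m * ε * ‖y‖^2 ≤ V y)
    (x : En n) (γ : ℝ → En n) (hγ : Adm n m V x γ) :
    m * Real.sqrt ε / 4 * ‖x‖^2 ≤ Iip n m V γ := by
  obtain ⟨⟨hc, hi, hftc⟩, h0, hint⟩ := hγ
  have hIipnn : 0 ≤ Iip n m V γ := aux_Iip_nonneg m hm V hVpos γ
  rcases eq_or_ne x 0 with hx0 | hx0
  · simpa [hx0] using hIipnn
  have hxpos : 0 < ‖x‖ := norm_pos_iff.mpr hx0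
  have hex : ∃ a : ℝ, a ≤ 0 ∧ ‖γ a‖ ≤ ‖x‖/2 := by
    by_contra hno
    push_neg at hno
    have hc₀ : 0 < (1/2)*m*ε*(‖x‖/2)^2 := by positivity
    have hci : Integrable (fun _ : ℝ => (1/2)*m*ε*(‖x‖/2)^2)
        (volume.restrict (Iic (0:ℝ))) := by
      apply Integrable.mono' hint aestronglyMeasurable_const
      filter_upwards [ae_restrict_mem measurableSet_Iic] with t ht
      have h1 : ‖x‖/2 ≤ ‖γ t‖ := (hno t ht).le
      have h2 : (1/2)*m*ε*‖γ t‖^2 ≤ V (γ t) := hVlb _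
      have h3 : (‖x‖/2)^2 ≤ ‖γ t‖^2 := pow_le_pow_left₀ (by positivity) h1 2
      rw [Real.norm_eq_abs, abs_of_nonneg hc₀.le]
      nlinarith [sq_nonneg ‖deriv γ t‖,
        mul_le_mul_of_nonneg_left h3 (le_of_lt (by positivity : (0:ℝ) < (1/2)*m*ε))]
    rw [integrable_const_iff] at hci
    rcases hci with h | h
    · exact hc₀.ne' h
    · replace h := h.measure_univ_lt_top; rw [Measure.restrict_apply_univ] at h
      rw [Real.volume_Iic] at h
      exact absurd h (by simp)
  obtain ⟨a, ha0, haγ⟩ := hex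
  have hcont : ContinuousOn (fun t => ‖γ t‖) (Icc a 0) :=
    (hc.mono (fun t ht => ht.2)).norm
  have hKcl : IsClosed (Icc a 0 ∩ (fun t => ‖γ t‖) ⁻¹' Iic (‖x‖/2)) :=
    hcont.preimage_isClosed_of_isClosed isClosed_Icc isClosed_Iic
  have haK : a ∈ Icc a 0 ∩ (fun t => ‖γ t‖) ⁻¹' Iic (‖x‖/2) := ⟨⟨le_rfl, ha0⟩, haγ⟩
  have hKbdd : BddAbove (Icc a 0 ∩ (fun t => ‖γ t‖) ⁻¹' Iic (‖x‖/2)) :=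
    bddAbove_Icc.mono inter_subset_left
  obtain ⟨b, hbdef⟩ : ∃ b : ℝ, b = sSup (Icc a 0 ∩ (fun t => ‖γ t‖) ⁻¹' Iic (‖x‖/2)) :=
    ⟨_, rfl⟩
  have hbK : b ∈ Icc a 0 ∩ (fun t => ‖γ t‖) ⁻¹' Iic (‖x‖/2) := by
    rw [hbdef]; exact hKcl.csSup_mem ⟨a, haK⟩ hKbdd
  have hb0 : b ≤ 0 := hbK.1.2
  have hab : a ≤ b := hbK.1.1
  have hγb : ‖γ b‖ ≤ ‖x‖/2 := hbK.2
  have hgt : ∀ t ∈ Ioc b 0, ‖x‖/2 ≤ ‖γ t‖ := by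
    intro t ht
    by_contra hlt
    push_neg at hlt
    have htK : t ∈ Icc a 0 ∩ (fun s => ‖γ s‖) ⁻¹' Iic (‖x‖/2) :=
      ⟨⟨le_trans hab ht.1.le, ht.2⟩, hlt.le⟩
    have := le_csSup hKbdd htK
    rw [← hbdef] at this
    exact absurd this (not_le.mpr ht.1)
  have hμ2 : Real.sqrt ε ^ 2 = ε := Real.sq_sqrt hε.le
  have hκ : (0:ℝ) ≤ m * Real.sqrt ε * ‖x‖ / 2 := by positivity
  have hpt : ∀ t ∈ Ioc b 0,
      (m * Real.sqrt ε * ‖x‖ / 2) * ‖deriv γ t‖ ≤ (1/2)*m*‖deriv γ t‖^2 + V (γ t) := by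
    intro t ht
    have h1 := hgt t ht
    have h2 := hVlb (γ t)
    have h3 : (‖x‖/2)^2 ≤ ‖γ t‖^2 := pow_le_pow_left₀ (by positivity) h1 2
    have h2' : (1/2)*m*(Real.sqrt ε^2)*‖γ t‖^2 ≤ V (γ t) := by rw [hμ2]; exact hVlb _
    have hsp : (0:ℝ) < Real.sqrt ε := Real.sqrt_pos.mpr hε
    nlinarith [mul_nonneg hm.le (sq_nonneg (‖deriv γ t‖ - Real.sqrt ε * ‖x‖ / 2)),
      mul_le_mul_of_nonneg_left h3
        (le_of_lt (mul_pos (by linarith : (0:ℝ) < (1/2)*m) (pow_pos hsp 2))), h2']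
  have hIoc : IntegrableOn (fun t => (1/2)*m*‖deriv γ t‖^2 + V (γ t)) (Ioc b 0) :=
    hint.mono_set Ioc_subset_Iic_self
  have hdint : IntegrableOn (deriv γ) (Icc b 0) := hi b 0 hb0 le_rfl
  have hnint : IntegrableOn (fun t => (m * Real.sqrt ε * ‖x‖ / 2) * ‖deriv γ t‖) (Ioc b 0) :=
    IntegrableOn.mono_set ((hdint.norm).const_mul _) Ioc_subset_Icc_self
  have step2 : (∫ t in Ioc b 0, (m * Real.sqrt ε * ‖x‖ / 2) * ‖deriv γ t‖)
      ≤ ∫ t in Ioc b 0, ((1/2)*m*‖deriv γ t‖^2 + V (γ t)) :=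
    setIntegral_mono_on hnint hIoc measurableSet_Ioc hpt
  have step1 : (∫ t in Ioc b 0, ((1/2)*m*‖deriv γ t‖^2 + V (γ t)))
      ≤ ∫ t in Iic (0:ℝ), ((1/2)*m*‖deriv γ t‖^2 + V (γ t)) :=
    setIntegral_mono_set hint
      (Eventually.of_forall fun t => add_nonneg (by positivity) (hVpos _))
      (HasSubset.Subset.eventuallyLE Ioc_subset_Iic_self)
  have hftcb : γ 0 - γ b = ∫ t in b..0, deriv γ t := hftc b 0 hb0 le_rfl
  have hlow : ‖x‖/2 ≤ ∫ t in Ioc b 0, ‖deriv γ t‖ := by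
    have h3 : ‖γ 0 - γ b‖ ≤ ∫ t in b..0, ‖deriv γ t‖ := by
      rw [hftcb]
      exact intervalIntegral.norm_integral_le_integral_norm hb0
    have h5 := norm_sub_norm_le (γ 0) (γ b)
    rw [h0] at h5 h3
    have h6 : ∫ t in b..0, ‖deriv γ t‖ = ∫ t in Ioc b 0, ‖deriv γ t‖ :=
      intervalIntegral.integral_of_le hb0
    linarith [hγb]
  have hconst : ∫ t in Ioc b 0, (m * Real.sqrt ε * ‖x‖ / 2) * ‖deriv γ t‖
      = (m * Real.sqrt ε * ‖x‖ / 2) * ∫ t in Ioc b 0, ‖deriv γ t‖ := integral_const_mul _ _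
  have final : m * Real.sqrt ε / 4 * ‖x‖^2
      ≤ (m * Real.sqrt ε * ‖x‖ / 2) * ∫ t in Ioc b 0, ‖deriv γ t‖ := by
    have h7 := mul_le_mul_of_nonneg_left hlow hκ
    nlinarith [h7]
  unfold Iip
  rw [hconst] at step2
  linarith

lemma aux_gauss (β : ℝ) (hβ : 0 < β) (n : ℕ) :
    Integrable (fun v : EuclideanSpace ℝ (Fin n) => Real.exp (-β * ‖v‖^2)) := by
  have hβc : (0:ℝ) < ((β : ℝ) : ℂ).re := by rw [Complex.ofReal_re]; exact hβ
  have h1 := GaussianFourier.integrable_cexp_neg_mul_sq_norm_add_of_euclideanSpace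
    (ι := Fin n) (b := ((β : ℝ) : ℂ)) hβc 0 (0 : EuclideanSpace ℝ (Fin n))
  have h2 := h1.norm
  apply h2.congr
  filter_upwards with v
  rw [Complex.norm_exp]
  congr 1
  rw [show (-((β:ℝ):ℂ) * ((‖v‖:ℝ):ℂ)^2 + 0 * ((inner ℝ 0 v : ℝ):ℂ))
      = ((-β * ‖v‖^2 : ℝ) : ℂ) by push_cast; ring, Complex.ofReal_re]

/-- normalizability of the ground-state ansatz: for every `ℏ > 0`,
`x ↦ e^{-S₍₀₎(x)/ℏ}` is square-integrable, i.e. `∫ e^{-2S₍₀₎(x)/ℏ} dx < ∞`. -/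
theorem stmt_10
    (n : ℕ) (hn : 1 ≤ n) (m : ℝ) (hm : 0 < m)
    (ω : Fin n → ℝ) (hω : ∀ i, 0 < ω i)
    (A : En n → ℝ) (hA : ContDiff ℝ (⊤ : ℕ∞) A) (hA0 : A 0 = 0)
    (hA1 : fderiv ℝ A 0 = 0) (hA2 : fderiv ℝ (fderiv ℝ A) 0 = 0)
    (lam : Fin n → ℝ) (hlam : ∀ i, (lam i)^2 < (ω i)^2)
    (hAcoer : ∀ x : En n, -(1/2) * m * ∑ i, (lam i)^2 * (x i)^2 ≤ A x)
    (V : En n → ℝ)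
    (hV : ∀ x : En n, V x = (1/2) * m * (∑ i, (ω i)^2 * (x i)^2) + A x)
    (hVpos : ∀ x, 0 ≤ V x) (hVzero : ∀ x : En n, V x = 0 ↔ x = 0)
    (hVconv : ConvexOn ℝ univ V)
    (γmin : En n → ℝ → En n)
    (hadm : ∀ x, Adm n m V x (γmin x))
    (hmin : ∀ x γ, Adm n m V x γ → Iip n m V (γmin x) ≤ Iip n m V γ)
    (huniq : ∀ x γ, Adm n m V x γ →
      (∀ γ', Adm n m V x γ' → Iip n m V γ ≤ Iip n m V γ') →
      EqOn γ (γmin x) (Iic (0:ℝ)))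
    (S : En n → ℝ) (hS : ∀ x, S x = Iip n m V (γmin x))
    :
    ∀ hbar : ℝ, 0 < hbar →
      Integrable (fun x : En n => Real.exp (-2 * S x / hbar)) := by
  intro hbar hbarpos
  have hnem : Nonempty (Fin n) := ⟨⟨0, hn⟩⟩
  obtain ⟨ε, hεdef⟩ : ∃ e : ℝ, e = Finset.univ.inf' Finset.univ_nonempty
      (fun i : Fin n => (ω i)^2 - (lam i)^2) := ⟨_, rfl⟩
  have hε : 0 < ε := by
    rw [hεdef, Finset.lt_inf'_iff]
    intro i _
    have := hlam i
    linarith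
  have hεle : ∀ i, ε ≤ (ω i)^2 - (lam i)^2 := by
    intro i
    rw [hεdef]
    exact Finset.inf'_le _ (Finset.mem_univ i)
  have hnormsq : ∀ y : En n, ‖y‖^2 = ∑ i, (y i)^2 := by
    intro y
    rw [EuclideanSpace.norm_eq, Real.sq_sqrt (Finset.sum_nonneg fun i _ => sq_nonneg _)]
    simp [Real.norm_eq_abs, sq_abs]
  have hVlb : ∀ y : En n, (1/2) * m * ε * ‖y‖^2 ≤ V y := by
    intro y
    rw [hV y]
    have h1 : -(1/2) * m * ∑ i, (lam i)^2 * (y i)^2 ≤ A y := hAcoer y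
    have h2 : (1/2)*m*ε*‖y‖^2 ≤ (1/2)*m*(∑ i, (ω i)^2*(y i)^2)
        - (1/2)*m*(∑ i, (lam i)^2*(y i)^2) := by
      rw [hnormsq, Finset.mul_sum, Finset.mul_sum, Finset.mul_sum, ← Finset.sum_sub_distrib]
      apply Finset.sum_le_sum
      intro i _
      have h3 := hεle i
      nlinarith [mul_le_mul_of_nonneg_right (hεle i)
        (by positivity : (0:ℝ) ≤ (1/2)*m*(y i)^2)]
    linarith
  have hVcont : Continuous V := continuousOn_univ.mp (hVconv.continuousOn isOpen_univ)
  have hSconv : ConvexOn ℝ univ S := aux_S_convex m hm V hVcont hVpos hVconv γmin hadm hmin S hS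
  have hScont : Continuous S := continuousOn_univ.mp (hSconv.continuousOn isOpen_univ)
  have hSlb : ∀ x : En n, m * Real.sqrt ε / 4 * ‖x‖^2 ≤ S x := by
    intro x
    rw [hS x]
    exact aux_S_lb m hm ε hε V hVpos hVlb x (γmin x) (hadm x)
  have hsp : (0:ℝ) < Real.sqrt ε := Real.sqrt_pos.mpr hε
  have hβ : (0:ℝ) < m * Real.sqrt ε / (2 * hbar) := by positivity
  have hg : Integrable (fun v : En n =>
      Real.exp (-(m * Real.sqrt ε / (2 * hbar)) * ‖v‖^2)) :=
    aux_gauss _ hβ n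
  apply Integrable.mono' hg
    (((continuous_const.mul hScont).div_const hbar).rexp.aestronglyMeasurable)
  filter_upwards with x
  simp only [Real.norm_eq_abs, Real.abs_exp, Pi.mul_apply]
  apply Real.exp_le_exp.mpr
  rw [div_le_iff₀ hbarpos]
  have he : (-(m * Real.sqrt ε / (2 * hbar)) * ‖x‖^2) * hbar
      = -(m * Real.sqrt ε / 4 * ‖x‖^2) * 2 := by
    field_simp
    ring
  rw [he]
  linarith [hSlb x]
end
end

section
/- Good cover theorem: let {f_i}_{i ∈ ℕ} be a sequence of nonnegative measurable functions on ℝⁿ with ∫_{ℝⁿ} f_i dx ≤ C for all i and some constant C. Then for every ε > 0 there exist a strictly increasing map σ : ℕ → ℕ (a subsequence), a finite set of points {P_1, …, P_N} ⊂ ℝⁿ, and a collection 𝒢 of open balls in ℝⁿ whose union contains ℝⁿ \ {P_1, …, P_N}, such that for every ball B ∈ 𝒢 there exists an index i_B with ∫_B f_{σ(i)} dx ≤ ε for all i ≥ i_B. -/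
open MeasureTheory Set Filter
open ENNReal Topology

noncomputable section

/-- good cover theorem.  Given a sequence of nonnegative measurable
functions on `ℝⁿ` with uniformly bounded Lebesgue integrals, for every `ε > 0` there
exist a subsequence, a finite set of exceptional points, and a collection of open
balls covering their complement, on each of which the integrals of the subsequence
are eventually at most `ε`. -/
theorem stmt_15 (n : ℕ) (hn : 1 ≤ n) (C : ℝ)
    (f : ℕ → En n → ℝ)
    (hmeas : ∀ i, Measurable (f i))
    (hnonneg : ∀ i x, 0 ≤ f i x)
    (hbound : ∀ i, ∫⁻ x, ENNReal.ofReal (f i x) ≤ ENNReal.ofReal C) :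
    ∀ ε : ℝ, 0 < ε →
      ∃ σ : ℕ → ℕ, StrictMono σ ∧
      ∃ Pts : Finset (En n), ∃ 𝒢 : Set (Set (En n)),
        (∀ B ∈ 𝒢, ∃ c : En n, ∃ r : ℝ, 0 < r ∧ B = Metric.ball c r) ∧
        (∀ x : En n, x ∉ Pts → ∃ B ∈ 𝒢, x ∈ B) ∧
        (∀ B ∈ 𝒢, ∃ iB : ℕ, ∀ i ≥ iB,
          ∫⁻ x in B, ENNReal.ofReal (f (σ i) x) ≤ ENNReal.ofReal ε) := by
  intro ε hε
  classical
  -- the measures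
  set ν : ℕ → Set (En n) → ℝ≥0∞ := fun i s => ∫⁻ x in s, ENNReal.ofReal (f i x) with hνdef
  set C0 : ℝ := max C 0 with hC0def
  have hC0nn : 0 ≤ C0 := le_max_right _ _
  have hC0 : ∀ i (s : Set (En n)), ν i s ≤ ENNReal.ofReal C0 := by
    intro i s
    refine (setLIntegral_le_lintegral s _).trans ((hbound i).trans ?_)
    exact ENNReal.ofReal_le_ofReal (le_max_left _ _)
  -- dense sequence
  obtain ⟨d, hd⟩ : ∃ d : ℕ → En n, DenseRange d :=
    ⟨_, TopologicalSpace.denseRange_denseSeq _⟩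
  -- countable family of balls
  set B : ℕ × ℕ → Set (En n) := fun p => Metric.ball (d p.1) (1 / ((p.2 : ℝ) + 1)) with hBdef
  -- every point belongs, for every j, to some ball of radius 1/(j+1)
  have hmem : ∀ (x : En n) (j : ℕ), ∃ m, x ∈ B (m, j) := by
    intro x j
    obtain ⟨m, hm⟩ := hd.exists_dist_lt x (by positivity : (0:ℝ) < 1 / ((j : ℝ) + 1))
    exact ⟨m, by simpa [hBdef, Metric.mem_ball, dist_comm] using hm⟩
  -- sequential compactness: extract a subsequence converging on every ball
  obtain ⟨L, -, σ, hσ, hconv⟩ :=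
    (isCompact_univ : IsCompact (Set.univ : Set (ℕ × ℕ → ℝ≥0∞))).tendsto_subseq
      (x := fun i => fun p => ν i (B p)) (fun _ => Set.mem_univ _)
  have hconv' : ∀ p, Tendsto (fun i => ν (σ i) (B p)) atTop (𝓝 (L p)) := by
    intro p
    exact tendsto_pi_nhds.1 hconv p
  refine ⟨σ, hσ, ?_⟩
  -- bad points
  set S : Set (En n) := {x | ∀ p, x ∈ B p → ENNReal.ofReal ε ≤ L p} with hSdef
  -- S is finite
  have hSfin : S.Finite := by
    by_contra hinf
    replace hinf : S.Infinite := hinf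
    set N : ℕ := ⌈C0 / ε⌉₊ + 2 with hNdef
    obtain ⟨F, hFS, hFcard⟩ := hinf.exists_subset_card_eq N
    -- minimal pairwise distance
    have h2 : 1 < F.card := by omega
    obtain ⟨a0, ha0, b0, hb0, hab⟩ := Finset.one_lt_card.1 h2
    set P : Finset (En n × En n) := (F ×ˢ F).filter (fun p => p.1 ≠ p.2) with hPdef
    have hPne : P.Nonempty := ⟨(a0, b0), by simp [hPdef, ha0, hb0, hab]⟩
    obtain ⟨p0, hp0, hp0min⟩ := Finset.exists_min_image P (fun p => dist p.1 p.2) hPne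
    set δ : ℝ := dist p0.1 p0.2 with hδdef
    have hδpos : 0 < δ := by
      have : p0.1 ≠ p0.2 := (Finset.mem_filter.1 hp0).2
      exact dist_pos.2 this
    have hδle : ∀ x ∈ F, ∀ y ∈ F, x ≠ y → δ ≤ dist x y := by
      intro x hx y hy hxy
      exact hp0min (x, y) (by simp [hPdef, hx, hy, hxy])
    obtain ⟨j, hj⟩ := exists_nat_one_div_lt (by positivity : (0:ℝ) < δ / 4)
    set r : ℝ := 1 / ((j : ℝ) + 1) with hrdef
    have hr4 : 4 * r < δ := by rw [hrdef]; linarith [hj]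
    -- choose centers
    choose m hm using fun x : En n => hmem x j
    -- the chosen balls are pairwise disjoint on F
    have hdisj : (↑F : Set (En n)).PairwiseDisjoint (fun x => B (m x, j)) := by
      intro x hx y hy hxy
      rw [Function.onFun, Set.disjoint_left]
      intro z hzx hzy
      have h1 : dist x (d (m x)) < r := by
        simpa [hBdef, Metric.mem_ball, hrdef] using hm x
      have h2 : dist z (d (m x)) < r := by
        simpa [hBdef, Metric.mem_ball, hrdef] using hzx
      have h3 : dist y (d (m y)) < r := by
        simpa [hBdef, Metric.mem_ball, hrdef] using hm y
      have h4 : dist z (d (m y)) < r := by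
        simpa [hBdef, Metric.mem_ball, hrdef] using hzy
      have hxy' : δ ≤ dist x y := hδle x hx y hy hxy
      have t1 : dist x y ≤ dist x (d (m x)) + dist (d (m x)) z + dist z y :=
        dist_triangle4 _ _ _ _
      have t2 : dist z y ≤ dist z (d (m y)) + dist (d (m y)) y := dist_triangle _ _ _
      have e1 : dist (d (m x)) z = dist z (d (m x)) := dist_comm _ _
      have e2 : dist (d (m y)) y = dist y (d (m y)) := dist_comm _ _
      linarith
    -- uniform bound on the sums
    have hsumle : ∀ i, ∑ x ∈ F, ν (σ i) (B (m x, j)) ≤ ENNReal.ofReal C0 := by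
      intro i
      rw [← lintegral_biUnion_finset hdisj (fun x _ => Metric.isOpen_ball.measurableSet) _]
      exact (setLIntegral_le_lintegral _ _).trans
        ((hbound (σ i)).trans (ENNReal.ofReal_le_ofReal (le_max_left _ _)))
    -- pass to the limit
    have hlim : Tendsto (fun i => ∑ x ∈ F, ν (σ i) (B (m x, j))) atTop
        (𝓝 (∑ x ∈ F, L (m x, j))) :=
      tendsto_finset_sum F (fun x _ => hconv' (m x, j))
    have hsumL : ∑ x ∈ F, L (m x, j) ≤ ENNReal.ofReal C0 :=
      le_of_tendsto' hlim hsumle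
    -- each L (m x, j) is at least ε
    have hlow : ∀ x ∈ F, ENNReal.ofReal ε ≤ L (m x, j) := by
      intro x hx
      exact hFS hx (m x, j) (hm x)
    have hbig : (N : ℝ≥0∞) * ENNReal.ofReal ε ≤ ENNReal.ofReal C0 := by
      calc (N : ℝ≥0∞) * ENNReal.ofReal ε = ∑ _x ∈ F, ENNReal.ofReal ε := by
            rw [Finset.sum_const, hFcard, nsmul_eq_mul]
        _ ≤ ∑ x ∈ F, L (m x, j) := Finset.sum_le_sum hlow
        _ ≤ ENNReal.ofReal C0 := hsumL
    -- contradiction in the reals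
    have hreal : (N : ℝ) * ε ≤ C0 := by
      rw [← ENNReal.ofReal_natCast, ← ENNReal.ofReal_mul (by positivity)] at hbig
      exact (ENNReal.ofReal_le_ofReal_iff hC0nn).1 hbig
    have hceil : C0 / ε ≤ (⌈C0 / ε⌉₊ : ℝ) := Nat.le_ceil _
    have hNval : (N : ℝ) = (⌈C0 / ε⌉₊ : ℝ) + 2 := by
      rw [hNdef]; push_cast; ring
    have : C0 < (N : ℝ) * ε := by
      rw [hNval]
      have : C0 ≤ (⌈C0 / ε⌉₊ : ℝ) * ε := by
        rwa [div_le_iff₀ hε] at hceil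
      nlinarith
    linarith
  -- assemble
  refine ⟨hSfin.toFinset, B '' {p | L p < ENNReal.ofReal ε}, ?_, ?_, ?_⟩
  · rintro U ⟨p, -, rfl⟩
    exact ⟨d p.1, 1 / ((p.2 : ℝ) + 1), by positivity, rfl⟩
  · intro x hx
    rw [Set.Finite.mem_toFinset] at hx
    have : ¬ ∀ p, x ∈ B p → ENNReal.ofReal ε ≤ L p := hx
    push_neg at this
    obtain ⟨p, hpx, hpL⟩ := this
    exact ⟨B p, ⟨p, hpL, rfl⟩, hpx⟩
  · rintro U ⟨p, hpL, rfl⟩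
    have hev : ∀ᶠ i in atTop, ν (σ i) (B p) < ENNReal.ofReal ε :=
      (hconv' p).eventually_lt_const hpL
    obtain ⟨iB, hiB⟩ := eventually_atTop.1 hev
    exact ⟨iB, fun i hi => (hiB i hi).le⟩
end
end
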